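/- arXiv:1410.2084 — 4 statements merged into one kernel-verified Lean document; each statement's English description precedes it below -/
import Mathlib

section
/- The characteristic polynomial of the Ish arrangement Ish_ℓ in K^ℓ equals t·(t−ℓ)^{ℓ−1}. -/
noncomputable section

/-- The intersection poset of an arrangement of hyperplanes (given as subsets of the
ambient space): all nonempty intersections of subfamilies (the whole space included,
as the empty intersection). -/
def interPoset {V : Type*} (A : Set (Set V)) : Set (Set V) :=
  {Y | ∃ B ⊆ A, Y = ⋂₀ B ∧ Y.Nonempty}

/-- The dimension of an (affine flat) subset of `K^ℓ`: the dimension of the direction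
of its affine span. -/
def flatDim (K : Type*) [Field K] {ℓ : ℕ} (Y : Set (Fin ℓ → K)) : ℕ :=
  Module.finrank K (affineSpan K Y).direction

/-- The Ish arrangement in `K^ℓ`: the hyperplanes `x_i - x_j = 0` and `x_1 - x_j = i`
for `1 ≤ i < j ≤ ℓ` (zero-based indexing of coordinates, so the constant is `i+1` for
zero-based `i`, and `x_1` is the coordinate `v 0`). -/
def ishArr (K : Type*) [Field K] (ℓ : ℕ) : Set (Set (Fin ℓ → K)) :=
  {H | ∃ i j : Fin ℓ, i < j ∧
    (H = {v | v i - v j = 0} ∨ H = {v | v ⟨0, i.pos⟩ - v j = ((i : ℕ) + 1 : K)})}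

namespace IshAux

universe u

variable {ℓ : ℕ}

abbrev Con (ℓ : ℕ) := Fin ℓ × Fin ℓ × ℤ

def SolP (F : Type*) [CommRing F] (S : Finset (Con ℓ)) (v : Fin ℓ → F) : Prop :=
  ∀ τ ∈ S, v τ.1 - v τ.2.1 = (τ.2.2 : F)

def Compat (F : Type*) [CommRing F] (δ : Fin ℓ → ℤ) (S : Finset (Con ℓ)) : Prop :=
  ∀ τ ∈ S, ((δ τ.1 - δ τ.2.1 - τ.2.2 : ℤ) : F) = 0

def Desc (F : Type*) [CommRing F] (δ : Fin ℓ → ℤ) (R : Fin ℓ → Fin ℓ)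
    (S : Finset (Con ℓ)) : Prop :=
  ∀ v : Fin ℓ → F, SolP F S v ↔ (Compat F δ S ∧ ∀ x, v x = v (R x) + (δ x : F))

def mergeδ (δ : Fin ℓ → ℤ) (R : Fin ℓ → Fin ℓ) (τ : Con ℓ) : Fin ℓ → ℤ :=
  fun x => if R x = R τ.2.1 then δ x + (δ τ.1 - τ.2.2 - δ τ.2.1) else δ x

def mergeR (R : Fin ℓ → Fin ℓ) (τ : Con ℓ) : Fin ℓ → Fin ℓ :=
  fun x => if R x = R τ.2.1 then R τ.1 else R x

variable {δ : Fin ℓ → ℤ} {R : Fin ℓ → Fin ℓ} {S : Finset (Con ℓ)} {τ : Con ℓ}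

lemma mergeδ_pos {x : Fin ℓ} (h : R x = R τ.2.1) :
    mergeδ δ R τ x = δ x + (δ τ.1 - τ.2.2 - δ τ.2.1) := if_pos h

lemma mergeδ_neg {x : Fin ℓ} (h : ¬ R x = R τ.2.1) : mergeδ δ R τ x = δ x := if_neg h

lemma mergeR_pos {x : Fin ℓ} (h : R x = R τ.2.1) : mergeR R τ x = R τ.1 := if_pos h

lemma mergeR_neg {x : Fin ℓ} (h : ¬ R x = R τ.2.1) : mergeR R τ x = R x := if_neg h

lemma mergeR_idem (hRR : ∀ x, R (R x) = R x) (hab : R τ.1 ≠ R τ.2.1) :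
    ∀ x, mergeR R τ (mergeR R τ x) = mergeR R τ x := by
  intro x
  by_cases h : R x = R τ.2.1
  · have h2 : ¬ R (R τ.1) = R τ.2.1 := by rw [hRR]; exact hab
    rw [mergeR_pos h, mergeR_neg h2]
    exact hRR _
  · have h2 : ¬ R (R x) = R τ.2.1 := by rw [hRR]; exact h
    rw [mergeR_neg h, mergeR_neg h2, hRR]

lemma mergeδ_anchor (hRR : ∀ x, R (R x) = R x) (hδR : ∀ x, δ (R x) = 0)
    (hab : R τ.1 ≠ R τ.2.1) : ∀ x, mergeδ δ R τ (mergeR R τ x) = 0 := by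
  intro x
  by_cases h : R x = R τ.2.1
  · have h2 : ¬ R (R τ.1) = R τ.2.1 := by rw [hRR]; exact hab
    rw [mergeR_pos h, mergeδ_neg h2]
    exact hδR _
  · have h2 : ¬ R (R x) = R τ.2.1 := by rw [hRR]; exact h
    rw [mergeR_neg h, mergeδ_neg h2]
    exact hδR _

lemma mergeR_comp (hS : ∀ σ ∈ S, R σ.1 = R σ.2.1) (hab : R τ.1 ≠ R τ.2.1) :
    ∀ σ ∈ insert τ S, mergeR R τ σ.1 = mergeR R τ σ.2.1 := by
  intro σ hσ
  rcases Finset.mem_insert.1 hσ with rfl | hσ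
  · rw [mergeR_neg hab, mergeR_pos rfl]
  · have h := hS σ hσ
    by_cases h1 : R σ.1 = R τ.2.1
    · rw [mergeR_pos h1, mergeR_pos (h.symm.trans h1)]
    · rw [mergeR_neg h1, mergeR_neg (fun hh => h1 (h.trans hh))]
      exact h

lemma desc_insert_same (F : Type*) [CommRing F]
    (hab : R τ.1 = R τ.2.1) (hD : Desc F δ R S) : Desc F δ R (insert τ S) := by
  intro v
  rw [SolP, Finset.forall_mem_insert, ← SolP]
  rw [show Compat F δ (insert τ S) ↔ _ ∧ _ from Finset.forall_mem_insert _ _ _, ← Compat]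
  rw [hD v]
  constructor
  · rintro ⟨hnew, hcmp, hcs⟩
    have h1 := hcs τ.1
    have h2 := hcs τ.2.1
    have h3 : v (R τ.1) = v (R τ.2.1) := by rw [hab]
    refine ⟨⟨?_, hcmp⟩, hcs⟩
    push_cast
    linear_combination -h1 + h2 + hnew - h3
  · rintro ⟨⟨hnew, hcmp⟩, hcs⟩
    have h1 := hcs τ.1
    have h2 := hcs τ.2.1
    have h3 : v (R τ.1) = v (R τ.2.1) := by rw [hab]
    refine ⟨?_, ⟨hcmp, hcs⟩⟩
    push_cast at hnew ⊢
    linear_combination h1 - h2 + hnew + h3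

lemma desc_insert_merge (F : Type*) [CommRing F]
    (hRR : ∀ x, R (R x) = R x) (hδR : ∀ x, δ (R x) = 0)
    (hS : ∀ σ ∈ S, R σ.1 = R σ.2.1)
    (hab : R τ.1 ≠ R τ.2.1) (hD : Desc F δ R S) :
    Desc F (mergeδ δ R τ) (mergeR R τ) (insert τ S) := by
  intro v
  have hcmp_iff : Compat F (mergeδ δ R τ) (insert τ S) ↔ Compat F δ S := by
    rw [Compat, Finset.forall_mem_insert]
    have hnew : mergeδ δ R τ τ.1 - mergeδ δ R τ τ.2.1 - τ.2.2 = 0 := by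
      rw [mergeδ_neg hab, mergeδ_pos rfl]; ring
    constructor
    · rintro ⟨-, h⟩ σ hσ
      have h2 := h σ hσ
      have hc := hS σ hσ
      by_cases h1 : R σ.1 = R τ.2.1
      · rw [mergeδ_pos h1, mergeδ_pos (hc.symm.trans h1)] at h2
        push_cast at h2 ⊢; linear_combination h2
      · rw [mergeδ_neg h1, mergeδ_neg (fun hh => h1 (hc.trans hh))] at h2
        exact h2
    · intro h
      refine ⟨by rw [hnew]; push_cast; ring, ?_⟩
      intro σ hσ
      have h2 := h σ hσ
      have hc := hS σ hσ
      by_cases h1 : R σ.1 = R τ.2.1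
      · rw [mergeδ_pos h1, mergeδ_pos (hc.symm.trans h1)]
        push_cast at h2 ⊢; linear_combination h2
      · rw [mergeδ_neg h1, mergeδ_neg (fun hh => h1 (hc.trans hh))]
        exact h2
  rw [SolP, Finset.forall_mem_insert, ← SolP, hcmp_iff, hD v]
  constructor
  · rintro ⟨hnew, hcmp, hcs⟩
    refine ⟨hcmp, ?_⟩
    have h1 := hcs τ.1
    have h2 := hcs τ.2.1
    have key : v (R τ.2.1) = v (R τ.1) + ((δ τ.1 - τ.2.2 - δ τ.2.1 : ℤ) : F) := by
      push_cast
      linear_combination h1 - h2 - hnew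
    intro x
    by_cases h : R x = R τ.2.1
    · rw [mergeR_pos h, mergeδ_pos h]
      have hx := hcs x
      rw [h] at hx
      rw [hx, key]; push_cast; ring
    · rw [mergeR_neg h, mergeδ_neg h]
      exact hcs x
  · rintro ⟨hcmp, hcs'⟩
    have hRb : v (R τ.2.1) = v (R τ.1) + ((δ τ.1 - τ.2.2 - δ τ.2.1 : ℤ) : F) := by
      have h := hcs' (R τ.2.1)
      rw [mergeR_pos (hRR _), mergeδ_pos (hRR _), hδR] at h
      rw [h]; push_cast; ring
    have hcs : ∀ x, v x = v (R x) + (δ x : F) := by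
      intro x
      by_cases h : R x = R τ.2.1
      · have hx := hcs' x
        rw [mergeR_pos h, mergeδ_pos h] at hx
        rw [h, hRb]
        rw [hx]; push_cast; ring
      · have hx := hcs' x
        rw [mergeR_neg h, mergeδ_neg h] at hx
        exact hx
    have vab : v τ.1 - v τ.2.1 = (τ.2.2 : F) := by
      have h1 := hcs τ.1
      have h2 := hcs τ.2.1
      push_cast at hRb
      push_cast
      linear_combination h1 - h2 - hRb
    exact ⟨vab, hcmp, hcs⟩

lemma exists_desc (K : Type u) [CommRing K] (S : Finset (Con ℓ)) :
    ∃ (δ : Fin ℓ → ℤ) (R : Fin ℓ → Fin ℓ),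
      (∀ x, R (R x) = R x) ∧ (∀ x, δ (R x) = 0) ∧ (∀ σ ∈ S, R σ.1 = R σ.2.1) ∧
      (∀ (F : Type) [CommRing F], Desc F δ R S) ∧ Desc K δ R S := by
  induction S using Finset.induction_on with
  | empty =>
      refine ⟨0, id, fun x => rfl, fun x => rfl, by simp,
        fun F _ => ?_, ?_⟩ <;>
        · intro v
          simp [SolP, Compat]
  | @insert τ S hτS ih =>
      obtain ⟨δ, R, h1, h2, h5, hD0, hDu⟩ := ih
      by_cases hab : R τ.1 = R τ.2.1
      · exact ⟨δ, R, h1, h2,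
          fun σ hσ => (Finset.mem_insert.1 hσ).elim (fun h => h ▸ hab) (h5 σ),
          fun F _ => desc_insert_same F hab (hD0 F),
          desc_insert_same K hab hDu⟩
      · exact ⟨mergeδ δ R τ, mergeR R τ, mergeR_idem h1 hab, mergeδ_anchor h1 h2 hab,
          mergeR_comp h5 hab,
          fun F _ => desc_insert_merge F h1 h2 h5 hab (hD0 F),
          desc_insert_merge K h1 h2 h5 hab hDu⟩


def CompatZ (δ : Fin ℓ → ℤ) (S : Finset (Con ℓ)) : Prop :=
  ∀ τ ∈ S, δ τ.1 - δ τ.2.1 - τ.2.2 = 0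

lemma compat_charzero (F : Type*) [CommRing F] [CharZero F] :
    Compat F δ S ↔ CompatZ δ S := by
  unfold Compat CompatZ
  constructor <;> intro h τ hτ
  · exact_mod_cast h τ hτ
  · rw [h τ hτ]; simp

lemma compat_zmod {q : ℕ} (hq : ∀ τ ∈ S, (δ τ.1 - δ τ.2.1 - τ.2.2).natAbs < q) :
    Compat (ZMod q) δ S ↔ CompatZ δ S := by
  constructor <;> intro h τ hτ
  · have h1 := h τ hτ
    rw [ZMod.intCast_zmod_eq_zero_iff_dvd] at h1
    refine Int.eq_zero_of_abs_lt_dvd h1 ?_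
    have h2 := hq τ hτ
    rw [Int.abs_eq_natAbs]
    exact_mod_cast h2
  · rw [h τ hτ]; simp

lemma solP_nonempty_iff (F : Type*) [CommRing F] (hδR : ∀ x, δ (R x) = 0)
    (hD : Desc F δ R S) : (∃ v, SolP F S v) ↔ Compat F δ S := by
  constructor
  · rintro ⟨v, hv⟩; exact ((hD v).1 hv).1
  · intro hc
    refine ⟨fun x => (δ x : F), (hD _).2 ⟨hc, fun x => ?_⟩⟩
    rw [hδR]; simp

/-- The solution set is in bijection with functions on the fixed points of `R`. -/
def solEquiv (F : Type*) [CommRing F] (hRR : ∀ x, R (R x) = R x) (hδR : ∀ x, δ (R x) = 0)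
    (hD : Desc F δ R S) (hc : Compat F δ S) :
    {v : Fin ℓ → F // SolP F S v} ≃ ({x : Fin ℓ // R x = x} → F) where
  toFun v y := v.1 y.1
  invFun w := ⟨fun x => w ⟨R x, hRR x⟩ + (δ x : F), by
    refine (hD _).2 ⟨hc, fun x => ?_⟩
    have h1 : (⟨R (R x), hRR (R x)⟩ : {x : Fin ℓ // R x = x}) = ⟨R x, hRR x⟩ :=
      Subtype.ext (hRR x)
    rw [h1, hδR]
    simp⟩
  left_inv v := by
    ext x
    have h := ((hD v.1).1 v.2).2 x
    simpa using h.symm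
  right_inv w := by
    funext y
    have h1 : (⟨R y.1, hRR y.1⟩ : {x : Fin ℓ // R x = x}) = y := Subtype.ext y.2
    have h2 : δ y.1 = 0 := by
      conv_lhs => rw [← y.2]
      exact hδR y.1
    simp [h1, h2]

lemma card_solP (q : ℕ) [NeZero q] (hRR : ∀ x, R (R x) = R x) (hδR : ∀ x, δ (R x) = 0)
    (hD : Desc (ZMod q) δ R S) (hc : Compat (ZMod q) δ S) :
    Nat.card {v : Fin ℓ → ZMod q // SolP (ZMod q) S v} =
      q ^ Nat.card {x : Fin ℓ // R x = x} := by
  rw [Nat.card_congr (solEquiv (ZMod q) hRR hδR hD hc), Nat.card_fun]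
  congr 1
  simp [Nat.card_eq_fintype_card]

lemma finrank_sol (K : Type*) [Field K] (hRR : ∀ x, R (R x) = R x)
    (hδR : ∀ x, δ (R x) = 0) (hD : Desc K δ R S) (hc : Compat K δ S) :
    Module.finrank K (affineSpan K {v : Fin ℓ → K | SolP K S v}).direction =
      Nat.card {x : Fin ℓ // R x = x} := by
  classical
  set δK : Fin ℓ → K := fun x => (δ x : K) with hδK
  have hset : {v : Fin ℓ → K | SolP K S v} = {v | ∀ x, v x = v (R x) + δK x} := by
    ext v
    rw [Set.mem_setOf_eq, hD v, and_iff_right hc]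
    rfl
  set s : Set (Fin ℓ → K) := {v | ∀ x, v x = v (R x) + δK x} with hs
  have hδKs : δK ∈ s := by
    intro x
    rw [hδK]
    simp only []
    rw [show δ (R x) = 0 from hδR x]
    simp
  have hW : ∀ w : Fin ℓ → K, (∀ x, w x = w (R x)) → w + δK ∈ s := by
    intro w hw x
    simp only [Pi.add_apply]
    rw [← hw x, hδK]
    simp only []
    rw [show δ (R x) = 0 from hδR x]
    push_cast
    ring
  set W : Submodule K (Fin ℓ → K) :=
    { carrier := {w | ∀ x, w x = w (R x)}
      add_mem' := by
        intro a b ha hb x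
        simp [ha x, hb x]
      zero_mem' := by intro x; simp
      smul_mem' := by
        intro c a ha x
        simp [Pi.smul_apply, ha x] } with hWdef
  have hvs : vectorSpan K s = W := by
    apply le_antisymm
    · rw [vectorSpan_def, Submodule.span_le]
      rintro u hu
      rw [Set.mem_vsub] at hu
      obtain ⟨v1, hv1, v2, hv2, rfl⟩ := hu
      intro x
      have e1 := hv1 x
      have e2 := hv2 x
      have hv : v1 -ᵥ v2 = v1 - v2 := rfl
      rw [hv, Pi.sub_apply, Pi.sub_apply, e1, e2]
      ring
    · intro w hw
      have h1 : (w + δK) -ᵥ δK = w := by simp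
      rw [vectorSpan_def]
      apply Submodule.subset_span
      rw [← h1]
      exact Set.vsub_mem_vsub (hW w hw) hδKs
  rw [hset, direction_affineSpan, hvs]
  have e : W ≃ₗ[K] ({x : Fin ℓ // R x = x} → K) :=
    { toFun := fun w y => w.1 y.1
      map_add' := fun a b => rfl
      map_smul' := fun c a => rfl
      invFun := fun u => ⟨fun x => u ⟨R x, hRR x⟩, by
        intro x
        have h1 : (⟨R (R x), hRR (R x)⟩ : {x : Fin ℓ // R x = x}) = ⟨R x, hRR x⟩ :=
          Subtype.ext (hRR x)
        simp only []
        exact (congrArg u h1).symm⟩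
      left_inv := by
        intro w
        ext x
        exact (w.2 x).symm
      right_inv := by
        intro u
        funext y
        have h1 : (⟨R y.1, hRR y.1⟩ : {x : Fin ℓ // R x = x}) = y := Subtype.ext y.2
        simp [h1] }
  rw [e.finrank_eq, Module.finrank_pi, Nat.card_eq_fintype_card]



open Finset in
/-- The staircase injection Finset. -/
def stair (q n m : ℕ) [NeZero q] : Finset (Fin n → ZMod q) :=
  Finset.univ.filter (fun u => Function.Injective u ∧ ∀ k : Fin n, (k : ℕ) + m < (u k).val)

lemma stair_card (q : ℕ) [NeZero q] :
    ∀ n m : ℕ, n + m < q → (stair q n m).card = (q - m - n) ^ n := by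
  intro n
  induction n with
  | zero =>
      intro m _
      rw [pow_zero]
      rw [show stair q 0 m = Finset.univ from ?_]
      · simp
      · rw [stair, Finset.filter_true_of_mem]
        intro u _
        exact ⟨fun a b _ => Subsingleton.elim a b, fun k => k.elim0⟩
  | succ n ih =>
      intro m hlt
      have hmaps : ∀ u ∈ stair q (n+1) m, (u ∘ Fin.succ) ∈ stair q n (m+1) := by
        intro u hu
        rw [stair, Finset.mem_filter] at hu ⊢
        obtain ⟨-, hinj, hval⟩ := hu
        refine ⟨Finset.mem_univ _, hinj.comp (Fin.succ_injective n), fun k => ?_⟩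
        simp only [Function.comp_apply]
        have := hval k.succ
        rw [Fin.val_succ] at this
        omega
      rw [Finset.card_eq_sum_card_fiberwise hmaps]
      have hfib : ∀ u' ∈ stair q n (m+1),
          ((stair q (n+1) m).filter (fun u => u ∘ Fin.succ = u')).card = q - m - 1 - n := by
        intro u' hu'
        rw [stair, Finset.mem_filter] at hu'
        obtain ⟨-, hinj', hval'⟩ := hu'
        have hsub : Finset.image u' Finset.univ ⊆
            Finset.univ.filter (fun x : ZMod q => m < x.val) := by
          intro x hx
          rw [Finset.mem_image] at hx
          obtain ⟨k, -, rfl⟩ := hx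
          rw [Finset.mem_filter]
          exact ⟨Finset.mem_univ _, by have := hval' k; omega⟩
        have hcard_big : (Finset.univ.filter (fun x : ZMod q => m < x.val)).card
            = q - (m + 1) := by
          rw [← Nat.card_Ico (m+1) q]
          apply Finset.card_bij (fun (x : ZMod q) _ => x.val)
          · intro x hx
            rw [Finset.mem_filter] at hx
            rw [Finset.mem_Ico]
            exact ⟨hx.2, ZMod.val_lt x⟩
          · intro x _ y _ h
            exact ZMod.val_injective q h
          · intro i hi
            rw [Finset.mem_Ico] at hi
            refine ⟨(i : ZMod q), ?_, ZMod.val_cast_of_lt hi.2⟩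
            rw [Finset.mem_filter, ZMod.val_cast_of_lt hi.2]
            exact ⟨Finset.mem_univ _, hi.1⟩
        have key : ((stair q (n+1) m).filter (fun u => u ∘ Fin.succ = u')).card
            = ((Finset.univ.filter (fun x : ZMod q => m < x.val))
                \ Finset.image u' Finset.univ).card := by
          apply Finset.card_bij (fun (u : Fin (n+1) → ZMod q) (_ : u ∈ _) => u 0)
          · intro u hu
            rw [Finset.mem_filter] at hu
            obtain ⟨hu1, hu2⟩ := hu
            rw [stair, Finset.mem_filter] at hu1
            obtain ⟨-, hinj, hval⟩ := hu1
            rw [Finset.mem_sdiff, Finset.mem_filter]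
            refine ⟨⟨Finset.mem_univ _, by have := hval 0; simpa using this⟩, ?_⟩
            rw [Finset.mem_image]
            rintro ⟨k, -, hk⟩
            have hk2 : u k.succ = u 0 := by rw [← hu2] at hk; exact hk
            exact (Fin.succ_ne_zero k) (hinj hk2)
          · intro u hu w hw h0
            rw [Finset.mem_filter] at hu hw
            funext x
            refine Fin.cases ?_ ?_ x
            · exact h0
            · intro k
              have h3 : (u ∘ Fin.succ) k = (w ∘ Fin.succ) k := by rw [hu.2, hw.2]
              exact h3
          · intro x hx
            rw [Finset.mem_sdiff, Finset.mem_filter] at hx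
            obtain ⟨⟨-, hxval⟩, hximg⟩ := hx
            refine ⟨Fin.cons x u', ?_, Fin.cons_zero _ _⟩
            rw [Finset.mem_filter]
            refine ⟨?_, by funext j; simp only [Function.comp_apply, Fin.cons_succ]⟩
            rw [stair, Finset.mem_filter]
            refine ⟨Finset.mem_univ _, ?_, ?_⟩
            · apply Fin.cons_injective_of_injective ?_ hinj'
              rintro ⟨k, hk⟩
              apply hximg
              rw [Finset.mem_image]
              exact ⟨k, Finset.mem_univ _, hk⟩
            · intro k
              refine Fin.cases ?_ ?_ k
              · simpa using hxval
              · intro j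
                rw [Fin.cons_succ, Fin.val_succ]
                have := hval' j
                omega
        rw [key, Finset.card_sdiff_of_subset hsub, hcard_big,
          Finset.card_image_of_injective _ hinj', Finset.card_univ, Fintype.card_fin]
        omega
      rw [Finset.sum_congr rfl hfib, Finset.sum_const, smul_eq_mul, ih (m+1) (by omega)]
      have h1 : q - m - 1 - n = q - (m+1) - n := by omega
      have h2 : q - m - (n+1) = q - (m+1) - n := by omega
      rw [h1, h2, ← pow_succ]


def IshE (ℓ : ℕ) (h : 0 < ℓ) : Finset (Con ℓ) :=
  (Finset.univ.filter (fun p : Fin ℓ × Fin ℓ => p.1 < p.2)).biUnion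
    (fun p => {(p.1, p.2, (0 : ℤ)), (⟨0, h⟩, p.2, ((p.1 : ℕ) : ℤ) + 1)})

lemma mem_IshE {h : 0 < ℓ} {τ : Con ℓ} :
    τ ∈ IshE ℓ h ↔ ∃ i j : Fin ℓ, i < j ∧
      (τ = (i, j, (0:ℤ)) ∨ τ = (⟨0, h⟩, j, ((i : ℕ) : ℤ) + 1)) := by
  simp only [IshE, Finset.mem_biUnion, Finset.mem_filter, Finset.mem_univ, true_and,
    Finset.mem_insert, Finset.mem_singleton, Prod.exists]

lemma IshE_spec {h : 0 < ℓ} {τ : Con ℓ} (hτ : τ ∈ IshE ℓ h) :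
    τ.1 ≠ τ.2.1 ∧ 0 ≤ τ.2.2 ∧ τ.2.2 ≤ (ℓ : ℤ) := by
  rw [mem_IshE] at hτ
  obtain ⟨i, j, hij, rfl | rfl⟩ := hτ
  · refine ⟨hij.ne, le_refl _, ?_⟩
    show (0 : ℤ) ≤ (ℓ : ℤ)
    positivity
  · have h1 : (i : ℕ) < (j : ℕ) := hij
    have h2 : (j : ℕ) < ℓ := j.2
    have h3 : (i : ℕ) < ℓ := i.2
    refine ⟨?_, ?_, ?_⟩
    · intro hzj
      have h4 : (0 : ℕ) = (j : ℕ) := congrArg Fin.val hzj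
      omega
    · show (0 : ℤ) ≤ ((i : ℕ) : ℤ) + 1
      positivity
    · show ((i : ℕ) : ℤ) + 1 ≤ (ℓ : ℤ)
      have h5 : (i : ℕ) + 1 ≤ ℓ := by omega
      exact_mod_cast h5

def embD {ℓ : ℕ} (k : Fin (ℓ-1)) : Fin ℓ := ⟨k.val + 1, by have := k.2; omega⟩

def kjD {ℓ : ℕ} (j : Fin ℓ) (hj : 0 < j.val) : Fin (ℓ-1) := ⟨j.val - 1, by have := j.2; omega⟩

lemma embD_kjD {j : Fin ℓ} (hj : 0 < j.val) : embD (kjD j hj) = j := by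
  apply Fin.ext
  show j.val - 1 + 1 = j.val
  omega

lemma kjD_embD (k : Fin (ℓ-1)) (hk : 0 < (embD (ℓ := ℓ) k).val) : kjD (embD k) hk = k := by
  apply Fin.ext
  show k.val + 1 - 1 = k.val
  omega

def psi {ℓ : ℕ} (q : ℕ) (p : ZMod q × (Fin (ℓ-1) → ZMod q)) (x : Fin ℓ) : ZMod q :=
  if _h0 : x.val = 0 then p.1 else p.1 - p.2 ⟨x.val - 1, by have := x.2; omega⟩

lemma psi_zero {q : ℕ} (p : ZMod q × (Fin (ℓ-1) → ZMod q)) (x : Fin ℓ) (hx : x.val = 0) :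
    psi q p x = p.1 := dif_pos hx

lemma psi_pos {q : ℕ} (p : ZMod q × (Fin (ℓ-1) → ZMod q)) (x : Fin ℓ) (hx : 0 < x.val) :
    psi q p x = p.1 - p.2 (kjD x hx) := dif_neg (by omega)

lemma phi_mem (hl : 0 < ℓ) (q : ℕ) [NeZero q] (hq : ℓ < q) (v : Fin ℓ → ZMod q)
    (hv : ∀ τ ∈ IshE ℓ hl, v τ.1 - v τ.2.1 ≠ (τ.2.2 : ZMod q)) :
    ((v ⟨0, hl⟩, fun k => v ⟨0, hl⟩ - v (embD k)) :
      ZMod q × (Fin (ℓ-1) → ZMod q)) ∈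
      (Finset.univ : Finset (ZMod q)) ×ˢ stair q (ℓ-1) 1 := by
  set z : Fin ℓ := ⟨0, hl⟩ with hz
  have hvne : ∀ i j : Fin ℓ, i < j → v i ≠ v j := by
    intro i j hij heq
    have hmem : ((i, j, (0:ℤ)) : Con ℓ) ∈ IshE ℓ hl := mem_IshE.2 ⟨i, j, hij, Or.inl rfl⟩
    exact hv _ hmem (by rw [heq]; simp)
  have hvz : ∀ (j : Fin ℓ) (c : ℕ), c ≤ j.val → 0 < j.val → v z - v j ≠ (c : ZMod q) := by
    intro j c hc hj
    cases c with
    | zero =>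
        simp only [Nat.cast_zero]
        rw [sub_ne_zero]
        apply hvne
        show z.val < j.val
        exact hj
    | succ i =>
        have hiℓ : i < ℓ := by have := j.2; omega
        have hmem : ((z, j, (((⟨i, hiℓ⟩ : Fin ℓ) : ℕ) : ℤ) + 1) : Con ℓ) ∈ IshE ℓ hl := by
          refine mem_IshE.2 ⟨⟨i, hiℓ⟩, j, ?_, Or.inr rfl⟩
          show i < j.val
          omega
      --
        have h2 := hv _ hmem
        intro heq
        apply h2
        show v z - v j = _
        rw [heq]
        push_cast
        ring
  rw [Finset.mem_product]
  refine ⟨Finset.mem_univ _, ?_⟩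
  show (fun k => v z - v (embD k)) ∈ stair q (ℓ-1) 1
  rw [stair, Finset.mem_filter]
  have hne2 : ∀ k k' : Fin (ℓ-1), k < k' → v z - v (embD k) ≠ v z - v (embD k') := by
    intro k k' hkk heq
    have h3 : v (embD k) = v (embD k') := sub_right_injective heq
    refine hvne (embD k) (embD k') ?_ h3
    show (embD (ℓ := ℓ) k).val < (embD (ℓ := ℓ) k').val
    show k.val + 1 < k'.val + 1
    have : k.val < k'.val := hkk
    omega
  refine ⟨Finset.mem_univ _, ?_, ?_⟩
  · intro k k' h
    simp only [] at h
    by_contra hkk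
    rcases Ne.lt_or_gt hkk with h' | h'
    · exact hne2 _ _ h' h
    · exact hne2 _ _ h' h.symm
  · intro k
    show (k : ℕ) + 1 < (v z - v (embD k)).val
    by_contra hle
    push_neg at hle
    have heq : ((v z - v (embD k)).val : ZMod q) = v z - v (embD k) :=
      ZMod.natCast_rightInverse _
    have hkv : (embD (ℓ := ℓ) k).val = k.val + 1 := rfl
    exact hvz (embD k) ((v z - v (embD k)).val)
      (by omega) (by omega) heq.symm

lemma psi_mem (hl : 0 < ℓ) (q : ℕ) [NeZero q] (hq : ℓ < q)
    (p : ZMod q × (Fin (ℓ-1) → ZMod q))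
    (hp : p ∈ (Finset.univ : Finset (ZMod q)) ×ˢ stair q (ℓ-1) 1) :
    ∀ τ ∈ IshE ℓ hl, psi q p τ.1 - psi q p τ.2.1 ≠ (τ.2.2 : ZMod q) := by
  obtain ⟨y, u⟩ := p
  rw [Finset.mem_product] at hp
  have hu := hp.2
  rw [stair, Finset.mem_filter] at hu
  obtain ⟨-, huinj, huval⟩ := hu
  have huval' : ∀ k : Fin (ℓ-1), (k : ℕ) + 1 < (u k).val := huval
  have hune : ∀ (k : Fin (ℓ-1)) (c : ℕ), c ≤ k.val + 1 → u k ≠ (c : ZMod q) := by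
    intro k c hc heq
    have h1 := huval' k
    have h2 : (u k).val = c := by
      rw [heq, ZMod.val_cast_of_lt (by have := k.2; omega)]
    omega
  intro τ hτ
  rw [mem_IshE] at hτ
  obtain ⟨i, j, hij, rfl | rfl⟩ := hτ
  · show psi q (y, u) i - psi q (y, u) j ≠ ((0 : ℤ) : ZMod q)
    have hjpos : 0 < j.val := by
      have : i.val < j.val := hij
      omega
    rw [psi_pos _ j hjpos]
    simp only [Int.cast_zero]
    by_cases hi0 : i.val = 0
    · rw [psi_zero _ i hi0]
      intro heq
      have h4 : u (kjD j hjpos) = 0 := by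
        have h5 := heq
        rw [sub_sub_cancel] at h5
        exact h5
      exact hune (kjD j hjpos) 0 (by omega) (by rw [h4]; simp)
    · have hipos : 0 < i.val := by omega
      rw [psi_pos _ i hipos]
      intro heq
      have h4 : u (kjD j hjpos) = u (kjD i hipos) := by
        have h5 : (y - u (kjD i hipos)) - (y - u (kjD j hjpos)) = 0 := heq
        linear_combination h5
      have h6 : kjD j hjpos ≠ kjD i hipos := by
        intro hh
        have h7 : j.val - 1 = i.val - 1 := congrArg Fin.val hh
        have h8 : i.val < j.val := hij
        omega
      exact h6 (huinj h4)
  · show psi q (y, u) ⟨0, hl⟩ - psi q (y, u) j ≠ _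
    have hjpos : 0 < j.val := by
      have : i.val < j.val := hij
      omega
    rw [psi_zero _ _ rfl, psi_pos _ j hjpos, sub_sub_cancel]
    intro heq
    have hcast : ((((i : ℕ) : ℤ) + 1 : ℤ) : ZMod q) = (((i : ℕ) + 1 : ℕ) : ZMod q) := by
      push_cast
      ring
    rw [hcast] at heq
    refine hune (kjD j hjpos) ((i : ℕ) + 1) ?_ heq
    show (i : ℕ) + 1 ≤ j.val - 1 + 1
    have h8 : i.val < j.val := hij
    omega

lemma avoid_card (hl : 0 < ℓ) (q : ℕ) [NeZero q] (hq : ℓ < q) :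
    (Finset.univ.filter (fun v : Fin ℓ → ZMod q =>
        ∀ τ ∈ IshE ℓ hl, v τ.1 - v τ.2.1 ≠ (τ.2.2 : ZMod q))).card
      = q * (q - ℓ) ^ (ℓ - 1) := by
  classical
  have hcard : ((Finset.univ : Finset (ZMod q)) ×ˢ stair q (ℓ-1) 1).card
      = q * (q - ℓ) ^ (ℓ - 1) := by
    rw [Finset.card_product, Finset.card_univ, ZMod.card,
      stair_card q (ℓ-1) 1 (by omega)]
    congr 2
    omega
  rw [← hcard]
  apply Finset.card_bij'
    (i := fun (v : Fin ℓ → ZMod q) (_ : v ∈ _) =>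
      ((v ⟨0, hl⟩, fun k => v ⟨0, hl⟩ - v (embD k)) : ZMod q × (Fin (ℓ-1) → ZMod q)))
    (j := fun p (_ : p ∈ _) => psi q p)
  · intro v hv
    rw [Finset.mem_filter] at hv
    exact phi_mem hl q hq v hv.2
  · intro p hp
    rw [Finset.mem_filter]
    exact ⟨Finset.mem_univ _, psi_mem hl q hq p hp⟩
  · intro v hv
    funext x
    by_cases hx : x.val = 0
    · rw [psi_zero _ x hx]
      have : x = ⟨0, hl⟩ := Fin.ext hx
      rw [this]
    · have hxpos : 0 < x.val := by omega
      rw [psi_pos _ x hxpos]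
      show v ⟨0, hl⟩ - (v ⟨0, hl⟩ - v (embD (kjD x hxpos))) = v x
      rw [embD_kjD hxpos, sub_sub_cancel]
  · intro p hp
    obtain ⟨y, u⟩ := p
    have h1 : psi q (y, u) ⟨0, hl⟩ = y := psi_zero _ _ rfl
    refine Prod.ext h1 ?_
    funext k
    show psi q (y, u) ⟨0, hl⟩ - psi q (y, u) (embD k) = u k
    have hkpos : 0 < (embD (ℓ := ℓ) k).val := by
      show 0 < k.val + 1
      omega
    rw [h1, psi_pos _ _ hkpos, kjD_embD, sub_sub_cancel]

open Classical in
lemma incl_excl (q : ℕ) [NeZero q] (E : Finset (Con ℓ)) :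
    ∑ S ∈ E.powerset, (-1 : ℤ) ^ S.card *
        ((Finset.univ.filter (fun v : Fin ℓ → ZMod q => SolP (ZMod q) S v)).card : ℤ)
      = ((Finset.univ.filter (fun v : Fin ℓ → ZMod q =>
          ∀ τ ∈ E, v τ.1 - v τ.2.1 ≠ (τ.2.2 : ZMod q))).card : ℤ) := by
  classical
  have h2 : ∀ v : Fin ℓ → ZMod q,
      ∑ S ∈ E.powerset, (-1:ℤ)^S.card * (if SolP (ZMod q) S v then 1 else 0)
        = ∏ τ ∈ E, ((if v τ.1 - v τ.2.1 = (τ.2.2 : ZMod q) then (-1:ℤ) else 0) + 1) := by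
    intro v
    rw [Finset.prod_add]
    apply Finset.sum_congr rfl
    intro S hS
    rw [Finset.prod_const_one, mul_one]
    by_cases hs : SolP (ZMod q) S v
    · rw [if_pos hs, mul_one,
        Finset.prod_congr rfl (fun τ hτ => if_pos (hs τ hτ)), Finset.prod_const]
    · rw [if_neg hs, mul_zero]
      rw [SolP] at hs
      push_neg at hs
      obtain ⟨τ, hτ, hne⟩ := hs
      exact (Finset.prod_eq_zero (f := fun τ : Con ℓ =>
        if v τ.1 - v τ.2.1 = (τ.2.2 : ZMod q) then (-1:ℤ) else 0) hτ (if_neg hne)).symm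
  have h3 : ∀ v : Fin ℓ → ZMod q,
      (∏ τ ∈ E, ((if v τ.1 - v τ.2.1 = (τ.2.2 : ZMod q) then (-1:ℤ) else 0) + 1))
        = if (∀ τ ∈ E, v τ.1 - v τ.2.1 ≠ (τ.2.2 : ZMod q)) then 1 else 0 := by
    intro v
    by_cases h : ∀ τ ∈ E, v τ.1 - v τ.2.1 ≠ (τ.2.2 : ZMod q)
    · rw [if_pos h, Finset.prod_eq_one]
      intro τ hτ
      rw [if_neg (h τ hτ)]
      norm_num
    · rw [if_neg h]
      push_neg at h
      obtain ⟨τ, hτ, heq⟩ := h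
      apply Finset.prod_eq_zero hτ
      rw [if_pos heq]
      norm_num
  calc ∑ S ∈ E.powerset, (-1 : ℤ) ^ S.card *
        ((Finset.univ.filter (fun v : Fin ℓ → ZMod q => SolP (ZMod q) S v)).card : ℤ)
      = ∑ S ∈ E.powerset, ∑ v : Fin ℓ → ZMod q,
          (-1:ℤ)^S.card * (if SolP (ZMod q) S v then 1 else 0) := by
        apply Finset.sum_congr rfl
        intro S _
        rw [← Finset.mul_sum, Finset.sum_boole]
    _ = ∑ v : Fin ℓ → ZMod q, ∑ S ∈ E.powerset,
          (-1:ℤ)^S.card * (if SolP (ZMod q) S v then 1 else 0) := Finset.sum_comm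
    _ = ∑ v : Fin ℓ → ZMod q,
          (if (∀ τ ∈ E, v τ.1 - v τ.2.1 ≠ (τ.2.2 : ZMod q)) then (1:ℤ) else 0) := by
        apply Finset.sum_congr rfl
        intro v _
        rw [h2 v, h3 v]
    _ = _ := by rw [Finset.sum_boole]

lemma sum_powerset_neg_one {α : Type*} [DecidableEq α] (s : Finset α) :
    ∑ t ∈ s.powerset, (-1 : ℤ)^t.card = if s = ∅ then 1 else 0 := by
  have h : ∑ t ∈ s.powerset, (-1 : ℤ)^t.card
      = ∑ t ∈ s.powerset, (∏ _i ∈ t, (-1:ℤ)) * ∏ _i ∈ s \ t, (1:ℤ) := by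
    apply Finset.sum_congr rfl
    intro t _
    rw [Finset.prod_const, Finset.prod_const_one, mul_one]
  rw [h, ← Finset.prod_add]
  rcases s.eq_empty_or_nonempty with rfl | hne
  · simp
  · rw [if_neg (Finset.nonempty_iff_ne_empty.1 hne)]
    apply Finset.prod_eq_zero hne.choose_spec
    norm_num

open Classical in
lemma mu_eq_nu {α : Type*} (P : Finset (Set α)) (μ ν : Set α → ℤ)
    (huniv : Set.univ ∈ P)
    (hμν : μ Set.univ = ν Set.univ)
    (hμ : ∀ X ∈ P, X ≠ Set.univ → ∑ Y ∈ P.filter (fun Y => X ⊆ Y), μ Y = 0)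
    (hν : ∀ X ∈ P, X ≠ Set.univ → ∑ Y ∈ P.filter (fun Y => X ⊆ Y), ν Y = 0) :
    ∀ X ∈ P, μ X = ν X := by
  classical
  suffices H : ∀ n : ℕ, ∀ X ∈ P, (P.filter (fun Y => X ⊂ Y)).card ≤ n → μ X = ν X by
    intro X hX
    exact H _ X hX le_rfl
  intro n
  induction n with
  | zero =>
      intro X hX hcard
      by_cases hXu : X = Set.univ
      · subst hXu; exact hμν
      · exfalso
        have huX : Set.univ ∈ P.filter (fun Y => X ⊂ Y) := by
          rw [Finset.mem_filter]
          exact ⟨huniv, HasSubset.Subset.ssubset_of_ne (Set.subset_univ X) hXu⟩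
        have := Finset.card_pos.2 ⟨_, huX⟩
        omega
  | succ n ih =>
      intro X hX hcard
      by_cases hXu : X = Set.univ
      · subst hXu; exact hμν
      · have hsplit : P.filter (fun Y => X ⊆ Y)
            = insert X (P.filter (fun Y => X ⊂ Y)) := by
          ext Y
          rw [Finset.mem_insert, Finset.mem_filter, Finset.mem_filter]
          constructor
          · rintro ⟨hY, hXY⟩
            by_cases hYX : Y = X
            · exact Or.inl hYX
            · exact Or.inr ⟨hY, HasSubset.Subset.ssubset_of_ne hXY (Ne.symm hYX)⟩
          · rintro (rfl | ⟨hY, hXY⟩)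
            · exact ⟨hX, subset_rfl⟩
            · exact ⟨hY, hXY.subset⟩
        have hXnot : X ∉ P.filter (fun Y => X ⊂ Y) := by
          rw [Finset.mem_filter]
          rintro ⟨-, h⟩
          exact h.ne rfl
        have hμX := hμ X hX hXu
        have hνX := hν X hX hXu
        rw [hsplit, Finset.sum_insert hXnot] at hμX hνX
        have hrec : ∀ Y ∈ P.filter (fun Y => X ⊂ Y), μ Y = ν Y := by
          intro Y hY
          rw [Finset.mem_filter] at hY
          obtain ⟨hYP, hXY⟩ := hY
          apply ih Y hYP
          have hsub : P.filter (fun Z => Y ⊂ Z) ⊂ P.filter (fun Z => X ⊂ Z) := by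
            constructor
            · intro Z hZ
              rw [Finset.mem_filter] at hZ ⊢
              exact ⟨hZ.1, hXY.trans hZ.2⟩
            · intro hcon
              have hYmem : Y ∈ P.filter (fun Z => X ⊂ Z) :=
                Finset.mem_filter.2 ⟨hYP, hXY⟩
              have := hcon hYmem
              rw [Finset.mem_filter] at this
              exact this.2.ne rfl
          have := Finset.card_lt_card hsub
          omega
        have : ∑ Y ∈ P.filter (fun Y => X ⊂ Y), μ Y
            = ∑ Y ∈ P.filter (fun Y => X ⊂ Y), ν Y := Finset.sum_congr rfl hrec
        omega

lemma poly_eq_of_eval_eq (p r : Polynomial ℤ) (N : ℕ)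
    (h : ∀ q : ℕ, N < q → p.eval (q : ℤ) = r.eval (q : ℤ)) : p = r := by
  have hroot : ∀ q : ℕ, (p - r).IsRoot ((N : ℤ) + 1 + q) := by
    intro q
    have h1 : N < N + 1 + q := by omega
    have h2 := h (N + 1 + q) h1
    rw [Polynomial.IsRoot, Polynomial.eval_sub]
    rw [show ((N : ℤ) + 1 + q) = ((N + 1 + q : ℕ) : ℤ) by push_cast; ring]
    omega
  have hinf : {x : ℤ | (p - r).IsRoot x}.Infinite := by
    exact Set.infinite_of_injective_forall_mem
      (f := fun q : ℕ => (N : ℤ) + 1 + q) (fun a b hab => by simpa using hab) hroot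
  have := Polynomial.eq_zero_of_infinite_isRoot _ hinf
  exact sub_eq_zero.mp this

end IshAux

open IshAux

/-- The characteristic polynomial of the Ish arrangement is `t (t - ℓ)^{ℓ-1}`:
for any Möbius function `μ` of the intersection poset (i.e. `μ(K^ℓ) = 1` and for each
flat `X ≠ K^ℓ` the sum of `μ` over the flats `Y ≥ X`, i.e. `Y ⊇ X`, vanishes), we have
`∑_{X ∈ L(A)} μ(X) t^{dim X} = t (t - ℓ)^{ℓ-1}`. -/
theorem ish_charpoly (K : Type*) [Field K] [CharZero K] (ℓ : ℕ) (hl : 1 ≤ ℓ)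
    (μ : Set (Fin ℓ → K) → ℤ)
    (hμ₁ : μ Set.univ = 1)
    (hμ₂ : ∀ X ∈ interPoset (ishArr K ℓ), X ≠ Set.univ →
      (∑ᶠ Y ∈ {Y ∈ interPoset (ishArr K ℓ) | X ⊆ Y}, μ Y) = 0) :
    ∀ t : ℤ,
      (∑ᶠ X ∈ interPoset (ishArr K ℓ), μ X * t ^ flatDim K X) =
        t * (t - (ℓ : ℤ)) ^ (ℓ - 1) := by
  classical
  intro t
  have hl0 : 0 < ℓ := hl
  set E : Finset (Con ℓ) := IshE ℓ hl0 with hE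
  set HK : Con ℓ → Set (Fin ℓ → K) := fun τ => {v | v τ.1 - v τ.2.1 = (τ.2.2 : K)} with hHK
  set Sol : Finset (Con ℓ) → Set (Fin ℓ → K) := fun S => {v | SolP K S v} with hSol
  choose δ R hRR hδR hcmp hD0 hDK using fun S : Finset (Con ℓ) => exists_desc K S
  set d : Finset (Con ℓ) → ℕ := fun S => Nat.card {x : Fin ℓ // R S x = x} with hd
  -- the arrangement is the image of `E` under `HK`
  have hIsh : ishArr K ℓ = ↑(E.image HK) := by
    ext X
    simp only [ishArr, Set.mem_setOf_eq, Finset.coe_image, Set.mem_image, Finset.mem_coe]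
    constructor
    · rintro ⟨i, j, hij, hX | hX⟩
      · refine ⟨(i, j, (0:ℤ)), mem_IshE.2 ⟨i, j, hij, Or.inl rfl⟩, ?_⟩
        rw [hX]
        ext v
        simp [hHK]
      · refine ⟨(⟨0, hl0⟩, j, ((i : ℕ) : ℤ) + 1), mem_IshE.2 ⟨i, j, hij, Or.inr rfl⟩, ?_⟩
        rw [hX]
        ext v
        simp only [hHK, Set.mem_setOf_eq]
        norm_cast
    · rintro ⟨τ, hτ, rfl⟩
      rw [mem_IshE] at hτ
      obtain ⟨i, j, hij, rfl | rfl⟩ := hτ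
      · exact ⟨i, j, hij, Or.inl (by ext v; simp [hHK])⟩
      · refine ⟨i, j, hij, Or.inr ?_⟩
        ext v
        simp only [hHK, Set.mem_setOf_eq]
        norm_cast
  -- solution sets as intersections
  have hSolInter : ∀ S : Finset (Con ℓ), Sol S = ⋂₀ ↑(S.image HK) := by
    intro S
    ext v
    simp only [hSol, Set.mem_setOf_eq, Finset.coe_image, Set.sInter_image, Set.mem_iInter,
      Finset.mem_coe, SolP, hHK]
  -- the intersection poset, as a Finset
  set P : Finset (Set (Fin ℓ → K)) :=
    (E.powerset.filter (fun S => (Sol S).Nonempty)).image Sol with hP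
  have hPne : ∀ X ∈ P, X.Nonempty := by
    intro X hX
    rw [hP, Finset.mem_image] at hX
    obtain ⟨S, hS, rfl⟩ := hX
    exact (Finset.mem_filter.1 hS).2
  have hposet : interPoset (ishArr K ℓ) = ↑P := by
    ext X
    constructor
    · rintro ⟨B, hBA, rfl, hne⟩
      rw [hIsh] at hBA
      set T : Finset (Con ℓ) := E.filter (fun τ => HK τ ∈ B) with hT
      have hBimg : B = ↑(T.image HK) := by
        ext b
        simp only [Finset.coe_image, Set.mem_image, Finset.mem_coe, hT, Finset.mem_filter]
        constructor
        · intro hb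
          have hb2 := hBA hb
          simp only [Finset.coe_image, Set.mem_image, Finset.mem_coe] at hb2
          obtain ⟨τ, hτ, rfl⟩ := hb2
          exact ⟨τ, ⟨hτ, hb⟩, rfl⟩
        · rintro ⟨τ, ⟨hτE, hτB⟩, rfl⟩
          exact hτB
      rw [Finset.mem_coe, hP, Finset.mem_image]
      refine ⟨T, Finset.mem_filter.2 ⟨Finset.mem_powerset.2 (Finset.filter_subset _ _), ?_⟩, ?_⟩
      · rw [hSolInter T, ← hBimg]
        exact hne
      · rw [hSolInter T, ← hBimg]
    · intro hX
      rw [Finset.mem_coe, hP, Finset.mem_image] at hX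
      obtain ⟨S, hS, rfl⟩ := hX
      rw [Finset.mem_filter, Finset.mem_powerset] at hS
      refine ⟨↑(S.image HK), ?_, hSolInter S, hS.2⟩
      rw [hIsh]
      exact Finset.coe_subset.2 (Finset.image_subset_image hS.1)
  have hSolEmpty : Sol ∅ = Set.univ := by
    ext v
    simp [hSol, SolP]
  have hunivP : Set.univ ∈ P := by
    rw [hP, Finset.mem_image]
    refine ⟨∅, Finset.mem_filter.2 ⟨Finset.empty_mem_powerset _, ?_⟩, hSolEmpty⟩
    rw [hSolEmpty]
    exact Set.univ_nonempty
  have hHKne : ∀ τ ∈ E, HK τ ≠ Set.univ := by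
    intro τ hτ hcontr
    obtain ⟨hne, -, -⟩ := IshE_spec (h := hl0) hτ
    set v : Fin ℓ → K := fun x => if x = τ.1 then (τ.2.2 : K) + 1 else 0 with hv
    have hvmem : v ∈ HK τ := by rw [hcontr]; exact Set.mem_univ v
    rw [hHK, Set.mem_setOf_eq, hv] at hvmem
    have h1 : (if τ.1 = τ.1 then (τ.2.2 : K) + 1 else 0)
        - (if τ.2.1 = τ.1 then (τ.2.2 : K) + 1 else 0) = (τ.2.2 : K) := hvmem
    rw [if_pos rfl, if_neg (fun hh => hne hh.symm)] at h1
    have h2 : (1 : K) = 0 := by linear_combination h1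
    simp at h2
  have hSolSub : ∀ (S : Finset (Con ℓ)), ∀ τ ∈ S, Sol S ⊆ HK τ := by
    intro S τ hτ v hv
    exact hv τ hτ
  have hsubSol : ∀ (X : Set (Fin ℓ → K)) (S : Finset (Con ℓ)),
      X ⊆ Sol S ↔ ∀ τ ∈ S, X ⊆ HK τ := by
    intro X S
    constructor
    · intro h τ hτ v hv
      exact (h hv) τ hτ
    · intro h v hv τ hτ
      exact h τ hτ hv
  set ν : Set (Fin ℓ → K) → ℤ :=
    fun X => ∑ S ∈ E.powerset.filter (fun S => Sol S = X), (-1:ℤ)^S.card with hν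
  have hν1 : ν Set.univ = 1 := by
    show ∑ S ∈ E.powerset.filter (fun S => Sol S = Set.univ), (-1:ℤ)^S.card = 1
    have hfilt : E.powerset.filter (fun S => Sol S = Set.univ) = {∅} := by
      ext S
      simp only [Finset.mem_filter, Finset.mem_powerset, Finset.mem_singleton]
      constructor
      · rintro ⟨hSE, hSu⟩
        by_contra hcne
        obtain ⟨τ, hτ⟩ := Finset.nonempty_iff_ne_empty.2 hcne
        have h1 : Sol S ⊆ HK τ := hSolSub S τ hτ
        rw [hSu] at h1
        exact hHKne τ (hSE hτ) (Set.eq_univ_of_univ_subset h1)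
      · rintro rfl
        exact ⟨Finset.empty_subset _, hSolEmpty⟩
    rw [hfilt, Finset.sum_singleton]
    simp
  have hνrec : ∀ X ∈ P, X ≠ Set.univ → ∑ Y ∈ P.filter (fun Y => X ⊆ Y), ν Y = 0 := by
    intro X hX hXu
    have hmaps : ∀ S ∈ E.powerset.filter (fun S => X ⊆ Sol S),
        Sol S ∈ P.filter (fun Y => X ⊆ Y) := by
      intro S hS
      rw [Finset.mem_filter, Finset.mem_powerset] at hS
      rw [Finset.mem_filter]
      refine ⟨?_, hS.2⟩
      rw [hP, Finset.mem_image]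
      exact ⟨S, Finset.mem_filter.2 ⟨Finset.mem_powerset.2 hS.1, (hPne X hX).mono hS.2⟩, rfl⟩
    have hfib := Finset.sum_fiberwise_of_maps_to hmaps (fun S => (-1:ℤ)^S.card)
    have hinner : ∀ Y ∈ P.filter (fun Y => X ⊆ Y),
        ∑ S ∈ (E.powerset.filter (fun S => X ⊆ Sol S)).filter (fun S => Sol S = Y),
          (-1:ℤ)^S.card = ν Y := by
      intro Y hY
      rw [Finset.mem_filter] at hY
      rw [hν]
      apply Finset.sum_congr ?_ (fun _ _ => rfl)
      ext S
      simp only [Finset.mem_filter, Finset.mem_powerset]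
      constructor
      · rintro ⟨⟨h1, h2⟩, h3⟩
        exact ⟨h1, h3⟩
      · rintro ⟨h1, h3⟩
        exact ⟨⟨h1, h3 ▸ hY.2⟩, h3⟩
    have hEXne : E.filter (fun τ => X ⊆ HK τ) ≠ ∅ := by
      have hXP := hX
      rw [hP, Finset.mem_image] at hXP
      obtain ⟨S₀, hS₀, hX0⟩ := hXP
      rw [Finset.mem_filter, Finset.mem_powerset] at hS₀
      have hS0ne : S₀ ≠ ∅ := by
        rintro rfl
        rw [hSolEmpty] at hX0
        exact hXu hX0.symm
      obtain ⟨τ, hτ⟩ := Finset.nonempty_iff_ne_empty.2 hS0ne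
      apply Finset.ne_empty_of_mem (a := τ)
      rw [Finset.mem_filter]
      refine ⟨hS₀.1 hτ, ?_⟩
      rw [← hX0]
      exact hSolSub S₀ τ hτ
    calc ∑ Y ∈ P.filter (fun Y => X ⊆ Y), ν Y
        = ∑ Y ∈ P.filter (fun Y => X ⊆ Y),
            ∑ S ∈ (E.powerset.filter (fun S => X ⊆ Sol S)).filter (fun S => Sol S = Y),
              (-1:ℤ)^S.card := (Finset.sum_congr rfl hinner).symm
      _ = ∑ S ∈ E.powerset.filter (fun S => X ⊆ Sol S), (-1:ℤ)^S.card := hfib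
      _ = ∑ S ∈ (E.filter (fun τ => X ⊆ HK τ)).powerset, (-1:ℤ)^S.card := by
          apply Finset.sum_congr ?_ (fun _ _ => rfl)
          ext S
          simp only [Finset.mem_filter, Finset.mem_powerset]
          constructor
          · rintro ⟨h1, h2⟩
            intro τ hτ
            rw [Finset.mem_filter]
            exact ⟨h1 hτ, ((hsubSol X S).1 h2) τ hτ⟩
          · intro h
            constructor
            · intro τ hτ
              exact (Finset.mem_filter.1 (h hτ)).1
            · exact (hsubSol X S).2 (fun τ hτ => (Finset.mem_filter.1 (h hτ)).2)
      _ = 0 := by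
          rw [sum_powerset_neg_one, if_neg hEXne]
  have hμP : ∀ X ∈ P, X ≠ Set.univ → ∑ Y ∈ P.filter (fun Y => X ⊆ Y), μ Y = 0 := by
    intro X hX hXu
    have h1 := hμ₂ X (by rw [hposet]; exact hX) hXu
    have hseteq : {Y ∈ interPoset (ishArr K ℓ) | X ⊆ Y} = ↑(P.filter (fun Y => X ⊆ Y)) := by
      rw [hposet, Finset.coe_filter]
      rfl
    rw [hseteq, finsum_mem_coe_finset] at h1
    exact h1
  have hμν := mu_eq_nu P μ ν hunivP (by rw [hμ₁, hν1]) hμP hνrec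
  have hCompatIff : ∀ S : Finset (Con ℓ), (Sol S).Nonempty ↔ CompatZ (δ S) S := by
    intro S
    have h1 : (Sol S).Nonempty ↔ ∃ v, SolP K S v := Iff.rfl
    rw [h1, solP_nonempty_iff K (hδR S) (hDK S), compat_charzero]
  have hdim : ∀ S : Finset (Con ℓ), CompatZ (δ S) S → flatDim K (Sol S) = d S := by
    intro S hS
    exact finrank_sol K (hRR S) (hδR S) (hDK S) ((compat_charzero K).2 hS)
  set Pl : Polynomial ℤ := ∑ S ∈ E.powerset,
    if CompatZ (δ S) S then Polynomial.C ((-1:ℤ)^S.card) * Polynomial.X ^ (d S) else 0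
    with hPldef
  have hPleval : ∀ s : ℤ, Pl.eval s
      = ∑ S ∈ E.powerset, if CompatZ (δ S) S then (-1:ℤ)^S.card * s ^ (d S) else 0 := by
    intro s
    rw [hPldef, Polynomial.eval_finset_sum]
    apply Finset.sum_congr rfl
    intro S _
    by_cases h : CompatZ (δ S) S
    · rw [if_pos h, if_pos h]
      simp
    · rw [if_neg h, if_neg h]
      simp
  set N : ℕ := max ℓ ((E.powerset).sup
    (fun S => S.sup (fun τ => (δ S τ.1 - δ S τ.2.1 - τ.2.2).natAbs))) with hNdef
  have hqeval : ∀ q : ℕ, N < q → Pl.eval (q:ℤ)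
      = (Polynomial.X * (Polynomial.X - Polynomial.C (ℓ:ℤ))^(ℓ-1)).eval (q:ℤ) := by
    intro q hq
    haveI : NeZero q := ⟨by omega⟩
    have hℓq : ℓ < q := lt_of_le_of_lt (le_max_left _ _) hq
    have hcompatq : ∀ S ∈ E.powerset, (Compat (ZMod q) (δ S) S ↔ CompatZ (δ S) S) := by
      intro S hS
      apply compat_zmod
      intro τ hτ
      have h1 : (δ S τ.1 - δ S τ.2.1 - τ.2.2).natAbs
          ≤ S.sup (fun τ => (δ S τ.1 - δ S τ.2.1 - τ.2.2).natAbs) :=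
        Finset.le_sup (f := fun τ => (δ S τ.1 - δ S τ.2.1 - τ.2.2).natAbs) hτ
      have h2 : S.sup (fun τ => (δ S τ.1 - δ S τ.2.1 - τ.2.2).natAbs)
          ≤ (E.powerset).sup
            (fun S => S.sup (fun τ => (δ S τ.1 - δ S τ.2.1 - τ.2.2).natAbs)) :=
        Finset.le_sup (f := fun S => S.sup
          (fun τ => (δ S τ.1 - δ S τ.2.1 - τ.2.2).natAbs)) hS
      have h3 := le_max_right ℓ ((E.powerset).sup
        (fun S => S.sup (fun τ => (δ S τ.1 - δ S τ.2.1 - τ.2.2).natAbs)))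
      omega
    have hcard : ∀ S ∈ E.powerset,
        ((Finset.univ.filter (fun v : Fin ℓ → ZMod q => SolP (ZMod q) S v)).card : ℤ)
          = if CompatZ (δ S) S then ((q:ℤ))^(d S) else 0 := by
      intro S hS
      by_cases h : CompatZ (δ S) S
      · rw [if_pos h]
        have hc : Compat (ZMod q) (δ S) S := (hcompatq S hS).2 h
        have h1 := card_solP q (hRR S) (hδR S) (hD0 S (ZMod q)) hc
        have h2 : Nat.card {v : Fin ℓ → ZMod q // SolP (ZMod q) S v}
            = (Finset.univ.filter (fun v : Fin ℓ → ZMod q => SolP (ZMod q) S v)).card := by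
          rw [Nat.card_eq_fintype_card, Fintype.card_subtype]
        rw [h2] at h1
        rw [h1]
        push_cast
        rfl
      · rw [if_neg h]
        have hempty : Finset.univ.filter (fun v : Fin ℓ → ZMod q => SolP (ZMod q) S v) = ∅ := by
          rw [Finset.filter_eq_empty_iff]
          intro v _
          intro hv
          exact h ((hcompatq S hS).1 (((hD0 S (ZMod q)) v).1 hv).1)
        rw [hempty]
        simp
    have hRHS : (Polynomial.X * (Polynomial.X - Polynomial.C (ℓ:ℤ))^(ℓ-1)).eval (q:ℤ)
        = ((q * (q-ℓ)^(ℓ-1) : ℕ) : ℤ) := by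
      rw [Polynomial.eval_mul, Polynomial.eval_pow, Polynomial.eval_sub, Polynomial.eval_X,
        Polynomial.eval_C]
      push_cast [Nat.cast_sub hℓq.le]
      ring
    rw [hPleval, hRHS, ← avoid_card hl0 q hℓq, ← incl_excl q E]
    apply Finset.sum_congr rfl
    intro S hS
    rw [hcard S hS]
    by_cases h : CompatZ (δ S) S
    · rw [if_pos h, if_pos h]
    · rw [if_neg h, if_neg h, mul_zero]
  have hPl : Pl = Polynomial.X * (Polynomial.X - Polynomial.C (ℓ:ℤ))^(ℓ-1) :=
    poly_eq_of_eval_eq _ _ N hqeval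
  calc ∑ᶠ X ∈ interPoset (ishArr K ℓ), μ X * t ^ flatDim K X
      = ∑ X ∈ P, μ X * t ^ flatDim K X := by rw [hposet, finsum_mem_coe_finset]
    _ = ∑ X ∈ P, ν X * t ^ flatDim K X :=
        Finset.sum_congr rfl (fun X hX => by rw [hμν X hX])
    _ = ∑ X ∈ P, ∑ S ∈ (E.powerset.filter (fun S => (Sol S).Nonempty)).filter
          (fun S => Sol S = X), (-1:ℤ)^S.card * t ^ flatDim K (Sol S) := by
        apply Finset.sum_congr rfl
        intro X hX
        rw [hν, Finset.sum_mul]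
        apply Finset.sum_congr ?_ ?_
        · ext S
          simp only [Finset.mem_filter, Finset.mem_powerset]
          constructor
          · rintro ⟨h1, h2⟩
            exact ⟨⟨h1, h2 ▸ hPne X hX⟩, h2⟩
          · rintro ⟨⟨h1, -⟩, h2⟩
            exact ⟨h1, h2⟩
        · intro S hS
          rw [(Finset.mem_filter.1 hS).2]
    _ = ∑ S ∈ E.powerset.filter (fun S => (Sol S).Nonempty),
          (-1:ℤ)^S.card * t ^ flatDim K (Sol S) := by
        apply Finset.sum_fiberwise_of_maps_to
        intro S hS
        rw [Finset.mem_filter] at hS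
        rw [hP, Finset.mem_image]
        exact ⟨S, Finset.mem_filter.2 ⟨hS.1, hS.2⟩, rfl⟩
    _ = ∑ S ∈ E.powerset, if CompatZ (δ S) S then (-1:ℤ)^S.card * t ^ (d S) else 0 := by
        rw [Finset.sum_filter]
        apply Finset.sum_congr rfl
        intro S hS
        by_cases h : (Sol S).Nonempty
        · rw [if_pos h, if_pos ((hCompatIff S).1 h), hdim S ((hCompatIff S).1 h)]
        · rw [if_neg h, if_neg (fun hc => h ((hCompatIff S).2 hc))]
    _ = Pl.eval t := (hPleval t).symm
    _ = t * (t - (ℓ : ℤ)) ^ (ℓ - 1) := by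
        rw [hPl, Polynomial.eval_mul, Polynomial.eval_pow, Polynomial.eval_sub,
          Polynomial.eval_X, Polynomial.eval_C]


end
end

section
/- If N = (N_2, …, N_ℓ) is a nest (i.e., the sets N_j are linearly ordered by inclusion after some permutation), then the cone over the N-Ish arrangement is supersolvable. -/
/-!
Rank the indices `j` so that the sets `N j` decrease, and let level `m` of the filtration consist
of `z` together with the hyperplanes of `c(Ish_N)` all of whose variables `x_{j+2}` have rank
below `m`. A hyperplane entering at level `m + 1` reads `x_{j+2} = L`, where `j` has rank `m` and
`L` is either a variable `x_{a+2}` of lower rank or `x₁ - c z` with `c ∈ N j`. Two such hyperplanes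
meet inside `L = L'`, which is a hyperplane `x_{a+2} = x_{b+2}`, `x₁ - x_{a+2} = c z` (as
`N j ⊆ N a`) or `z = 0` of level `m`: this is modularity. The same differences show that each level
adds one dimension, detected by evaluating at the unit vector of `x_{j+2}`. When every `N j` is
empty, `x₁` plays no role and the braid part is ranked by itself.
-/

open MvPolynomial

noncomputable section

/-- The defining linear forms of the cone over the `N`-Ish arrangement.
Variables: `some 0` is `x₁`, `some i.succ` is `x_{i+2}` for `i : Fin n`, `none` is `z`,
so the ambient space is `K^{ℓ+1}` with `ℓ = n+1`, and `N j` is `N_{j+2}`. -/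
def coneIsh {K : Type*} [CommRing K] (n : ℕ) (N : Fin n → Finset K) :
    Set (MvPolynomial (Option (Fin (n + 1))) K) :=
  {X none} ∪
    {p | ∃ i j : Fin n, i < j ∧ p = X (some i.succ) - X (some j.succ)} ∪
    {p | ∃ j : Fin n, ∃ a ∈ N j, p = X (some 0) - X (some j.succ) - C a * X none}

/-- `N` is a nest: after a permutation, the sets form a chain under inclusion. -/
def IsNest {n : ℕ} {α : Type*} (N : Fin n → Finset α) : Prop :=
  ∃ w : Equiv.Perm (Fin n), ∀ i j : Fin n, i ≤ j → N (w i) ⊆ N (w j)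

/-- The hyperplane of a defining linear form: its zero locus in `K^σ`. -/
def zeroSet {K : Type*} [CommRing K] {σ : Type*} (p : MvPolynomial σ K) :
    Set (σ → K) :=
  {v | eval v p = 0}

/-- A central arrangement, given by a set of defining linear forms, is supersolvable:
there is a filtration `A₁ ⊆ A₂ ⊆ … ⊆ A_r = A` of subarrangements with `rank Aᵢ = i`
such that any two distinct hyperplanes of `Aᵢ` intersect inside some hyperplane
of `A_{i-1}` (Björner–Edelman–Ziegler's characterization of supersolvability of the
intersection lattice). -/
def IsSupersolvable {K : Type*} [Field K] {σ : Type*}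
    (A : Set (MvPolynomial σ K)) : Prop :=
  ∃ (r : ℕ) (F : ℕ → Set (MvPolynomial σ K)),
    Module.finrank K (Submodule.span K A) = r ∧
    (∀ i, F i ⊆ F (i + 1)) ∧
    F r = A ∧
    (∀ i, 1 ≤ i → i ≤ r → Module.finrank K (Submodule.span K (F i)) = i) ∧
    (∀ i, 2 ≤ i → i ≤ r → ∀ α ∈ F i, ∀ β ∈ F i, zeroSet α ≠ zeroSet β →
      ∃ γ ∈ F (i - 1), zeroSet α ∩ zeroSet β ⊆ zeroSet γ)

theorem Submodule.finrank_sup_span_singleton_of_finite {K V : Type*} [DivisionRing K]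
    [AddCommGroup V] [Module K V] {p : Submodule K V} [Module.Finite K p] {v : V} (hv : v ∉ p) :
    Module.finrank K ↥(p ⊔ K ∙ v) = Module.finrank K p + 1 := by
  have hv₀ : v ≠ 0 := fun h => hv (h ▸ p.zero_mem)
  have h := Submodule.finrank_sup_add_finrank_inf_eq p (K ∙ v)
  rwa [(Submodule.disjoint_span_singleton_of_notMem hv).eq_bot, finrank_bot, add_zero,
    finrank_span_singleton hv₀] at h

theorem MvPolynomial.eval_eq_zero_of_mem_span {K σ : Type*} [CommRing K]
    {A : Set (MvPolynomial σ K)} {v : σ → K} (hA : ∀ p ∈ A, eval v p = 0)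
    {p : MvPolynomial σ K} (hp : p ∈ Submodule.span K A) : eval v p = 0 := by
  rw [← coe_aeval_eq_eval]
  refine (Submodule.span_le (p := LinearMap.ker (aeval v).toLinearMap)).2 (fun q hq => ?_) hp
  simpa [coe_aeval_eq_eval] using hA q hq

theorem zeroSet_neg {K σ : Type*} [CommRing K] (p : MvPolynomial σ K) :
    zeroSet (-p) = zeroSet p := by
  ext v
  simp [zeroSet]

section IshFiltration

variable {K : Type*} [Field K] {n : ℕ} (N : Fin n → Finset K) (ρ : Fin n → ℕ)

def ishLevel (m : ℕ) : Set (MvPolynomial (Option (Fin (n + 1))) K) :=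
  {X none} ∪
    {p | ∃ a b : Fin n, a < b ∧ ρ a < m ∧ ρ b < m ∧ p = X (some a.succ) - X (some b.succ)} ∪
    {p | ∃ j : Fin n, ρ j < m ∧ ∃ c ∈ N j, p = X (some 0) - X (some j.succ) - C c * X none}

def lowerForms (j : Fin n) : Set (MvPolynomial (Option (Fin (n + 1))) K) :=
  {L | ∃ a, ρ a < ρ j ∧ L = X (some a.succ)} ∪ {L | ∃ c ∈ N j, L = X (some 0) - C c * X none}

theorem ishLevel_mono : Monotone (ishLevel N ρ) := by
  intro m m' hm
  rintro p ((hp | ⟨a, b, hab, ha, hb, rfl⟩) | ⟨j, hj, c, hc, rfl⟩)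
  · exact Or.inl (Or.inl hp)
  · exact Or.inl (Or.inr ⟨a, b, hab, ha.trans_le hm, hb.trans_le hm, rfl⟩)
  · exact Or.inr ⟨j, hj.trans_le hm, c, hc, rfl⟩

theorem ishLevel_eq_coneIsh {m : ℕ} (hm : ∀ j, ρ j < m) : ishLevel N ρ m = coneIsh n N := by
  ext p
  simp [ishLevel, coneIsh, hm]

theorem ishLevel_one (hρ : Function.Injective ρ) (h₀ : ∀ j, ρ j = 0 → N j = ∅) :
    ishLevel N ρ 1 = {X none} := by
  refine Set.Subset.antisymm ?_ (fun p hp => Or.inl (Or.inl hp))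
  rintro p ((hp | ⟨a, b, hab, ha, hb, rfl⟩) | ⟨j, hj, c, hc, rfl⟩)
  · exact hp
  · exact absurd (hρ (by omega)) hab.ne
  · simp [h₀ j (by omega)] at hc

variable {N ρ}

theorem mem_ishLevel_succ (hρ : Function.Injective ρ) {m : ℕ} {α : MvPolynomial _ K}
    (hα : α ∈ ishLevel N ρ (m + 1)) :
    α ∈ ishLevel N ρ m ∨ ∃ j, ρ j = m ∧ ∃ L ∈ lowerForms N ρ j,
      α = X (some j.succ) - L ∨ α = -(X (some j.succ) - L) := by
  rcases hα with (hα | ⟨a, b, hab, ha, hb, rfl⟩) | ⟨j, hj, c, hc, rfl⟩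
  · exact Or.inl (Or.inl (Or.inl hα))
  · have hρab : ρ a ≠ ρ b := hρ.ne hab.ne
    by_cases hma : ρ a = m
    · exact Or.inr ⟨a, hma, _, Or.inl ⟨b, by omega, rfl⟩, Or.inl rfl⟩
    by_cases hmb : ρ b = m
    · exact Or.inr ⟨b, hmb, _, Or.inl ⟨a, by omega, rfl⟩, Or.inr (by ring)⟩
    · exact Or.inl (Or.inl (Or.inr ⟨a, b, hab, by omega, by omega, rfl⟩))
  · by_cases hmj : ρ j = m
    · exact Or.inr ⟨j, hmj, _, Or.inr ⟨c, hc, rfl⟩, Or.inr (by ring)⟩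
    · exact Or.inl (Or.inr ⟨j, by omega, c, hc, rfl⟩)

theorem exists_mem_ishLevel_smul_eq_sub (hN : ∀ a j, ρ a < ρ j → N j ⊆ N a) {j : Fin n}
    {L L' : MvPolynomial _ K} (hL : L ∈ lowerForms N ρ j) (hL' : L' ∈ lowerForms N ρ j)
    (hne : L ≠ L') : ∃ γ ∈ ishLevel N ρ (ρ j), ∃ c : K, c ≠ 0 ∧ L - L' = c • γ := by
  rcases hL with ⟨a, ha, rfl⟩ | ⟨c, hc, rfl⟩ <;> rcases hL' with ⟨b, hb, rfl⟩ | ⟨c', hc', rfl⟩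
  · rcases lt_trichotomy a b with hab | rfl | hab
    · exact ⟨_, Or.inl (Or.inr ⟨a, b, hab, ha, hb, rfl⟩), 1, one_ne_zero, (one_smul _ _).symm⟩
    · exact absurd rfl hne
    · exact ⟨_, Or.inl (Or.inr ⟨b, a, hab, hb, ha, rfl⟩), -1, by simp, by simp⟩
  · exact ⟨_, Or.inr ⟨a, ha, c', hN a j ha hc', rfl⟩, -1, by simp, by rw [neg_one_smul]; ring⟩
  · exact ⟨_, Or.inr ⟨b, hb, c, hN b j hb hc, rfl⟩, 1, one_ne_zero, by rw [one_smul]; ring⟩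
  · have hcc' : c' - c ≠ 0 := sub_ne_zero.2 fun h => hne (by rw [h])
    exact ⟨X none, Or.inl (Or.inl rfl), c' - c, hcc', by rw [smul_eq_C_mul, C_sub]; ring⟩

theorem ishLevel_modular (hρ : Function.Injective ρ) (hN : ∀ a j, ρ a < ρ j → N j ⊆ N a)
    {m : ℕ} {α β : MvPolynomial _ K} (hα : α ∈ ishLevel N ρ (m + 1))
    (hβ : β ∈ ishLevel N ρ (m + 1)) (hne : zeroSet α ≠ zeroSet β) :
    ∃ γ ∈ ishLevel N ρ m, zeroSet α ∩ zeroSet β ⊆ zeroSet γ := by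
  rcases mem_ishLevel_succ hρ hα with hα | ⟨j, rfl, L, hL, hα⟩
  · exact ⟨α, hα, Set.inter_subset_left⟩
  rcases mem_ishLevel_succ hρ hβ with hβ | ⟨j', hj', L', hL', hβ⟩
  · exact ⟨β, hβ, Set.inter_subset_right⟩
  obtain rfl : j = j' := (hρ hj').symm
  have hzα : zeroSet α = zeroSet (X (some j.succ) - L) := by
    rcases hα with rfl | rfl <;> simp only [zeroSet_neg]
  have hzβ : zeroSet β = zeroSet (X (some j.succ) - L') := by
    rcases hβ with rfl | rfl <;> simp only [zeroSet_neg]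
  have hLL' : L ≠ L' := by
    rintro rfl
    exact hne (hzα.trans hzβ.symm)
  obtain ⟨γ, hγ, c, hc, hsub⟩ := exists_mem_ishLevel_smul_eq_sub hN hL hL' hLL'
  refine ⟨γ, hγ, ?_⟩
  rw [hzα, hzβ]
  rintro v ⟨hv, hv'⟩
  have hcγ : c * eval v γ = 0 := by
    have h := congrArg (eval v) hsub
    simp only [zeroSet, Set.mem_ofPred_eq, map_sub, sub_eq_zero] at hv hv'
    rwa [map_sub, ← hv, ← hv', sub_self, smul_eq_C_mul, map_mul, eval_C, eq_comm] at h
  exact (mul_eq_zero.1 hcγ).resolve_left hc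

theorem eval_single_eq_zero_of_mem_ishLevel {j : Fin n} {m : ℕ} (hm : m ≤ ρ j)
    {p : MvPolynomial _ K} (hp : p ∈ ishLevel N ρ m) :
    eval (Pi.single (some j.succ) 1) p = 0 := by
  rcases hp with (rfl | ⟨a, b, -, ha, hb, rfl⟩) | ⟨a, ha, c, -, rfl⟩
  · simp
  · have ha' : a ≠ j := by rintro rfl; omega
    have hb' : b ≠ j := by rintro rfl; omega
    simp [ha', hb']
  · have ha' : a ≠ j := by rintro rfl; omega
    simp [ha']

theorem eval_single_eq_zero_of_mem_lowerForms {j : Fin n} {L : MvPolynomial _ K}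
    (hL : L ∈ lowerForms N ρ j) : eval (Pi.single (some j.succ) 1) L = 0 := by
  rcases hL with ⟨a, ha, rfl⟩ | ⟨c, -, rfl⟩
  · have ha' : a ≠ j := by rintro rfl; omega
    simp [ha']
  · simp

theorem X_sub_mem_span_ishLevel {j : Fin n} {L : MvPolynomial _ K}
    (hL : L ∈ lowerForms N ρ j) :
    X (some j.succ) - L ∈ Submodule.span K (ishLevel N ρ (ρ j + 1)) := by
  rcases hL with ⟨a, ha, rfl⟩ | ⟨c, hc, rfl⟩
  · rcases lt_or_gt_of_ne (show a ≠ j by rintro rfl; omega) with haj | hja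
    · rw [← neg_sub]
      exact Submodule.neg_mem _
        (Submodule.subset_span (Or.inl (Or.inr ⟨a, j, haj, by omega, by omega, rfl⟩)))
    · exact Submodule.subset_span (Or.inl (Or.inr ⟨j, a, hja, by omega, by omega, rfl⟩))
  · have h : X (some j.succ) - (X (some 0) - C c * X none) =
        -(X (some 0) - X (some j.succ) - C c * X none) := by ring
    rw [h]
    exact Submodule.neg_mem _ (Submodule.subset_span (Or.inr ⟨j, by omega, c, hc, rfl⟩))

theorem sub_mem_span_ishLevel (hN : ∀ a j, ρ a < ρ j → N j ⊆ N a) {j : Fin n}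
    {L L' : MvPolynomial _ K} (hL : L ∈ lowerForms N ρ j) (hL' : L' ∈ lowerForms N ρ j) :
    L - L' ∈ Submodule.span K (ishLevel N ρ (ρ j)) := by
  by_cases h : L = L'
  · rw [h, sub_self]
    exact zero_mem _
  obtain ⟨γ, hγ, c, -, hsub⟩ := exists_mem_ishLevel_smul_eq_sub hN hL hL' h
  rw [hsub]
  exact Submodule.smul_mem _ c (Submodule.subset_span hγ)

theorem span_ishLevel_succ (hρ : Function.Injective ρ) (hN : ∀ a j, ρ a < ρ j → N j ⊆ N a)
    {j : Fin n} {L₀ : MvPolynomial _ K} (hL₀ : L₀ ∈ lowerForms N ρ j) :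
    Submodule.span K (ishLevel N ρ (ρ j + 1)) =
      Submodule.span K (ishLevel N ρ (ρ j)) ⊔ K ∙ (X (some j.succ) - L₀) := by
  refine le_antisymm (Submodule.span_le.2 fun α hα => ?_)
    (sup_le (Submodule.span_mono (ishLevel_mono N ρ (Nat.le_succ _)))
      ((Submodule.span_singleton_le_iff_mem _ _).2 (X_sub_mem_span_ishLevel hL₀)))
  rcases mem_ishLevel_succ hρ hα with hα | ⟨j', hj', L, hL, hαL⟩
  · exact Submodule.mem_sup_left (Submodule.subset_span hα)
  obtain rfl : j' = j := hρ hj'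
  have hnew : X (some j'.succ) - L ∈
      Submodule.span K (ishLevel N ρ (ρ j')) ⊔ K ∙ (X (some j'.succ) - L₀) := by
    rw [← sub_add_sub_cancel _ L₀ L]
    exact add_mem (Submodule.mem_sup_right (Submodule.mem_span_singleton_self _))
      (Submodule.mem_sup_left (sub_mem_span_ishLevel hN hL₀ hL))
  rcases hαL with rfl | rfl
  · exact hnew
  · exact neg_mem hnew

theorem finrank_span_ishLevel_succ (hρ : Function.Injective ρ)
    (hN : ∀ a j, ρ a < ρ j → N j ⊆ N a) {j : Fin n} {L₀ : MvPolynomial _ K}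
    (hL₀ : L₀ ∈ lowerForms N ρ j) [Module.Finite K (Submodule.span K (ishLevel N ρ (ρ j)))] :
    Module.finrank K (Submodule.span K (ishLevel N ρ (ρ j + 1))) =
      Module.finrank K (Submodule.span K (ishLevel N ρ (ρ j))) + 1 := by
  rw [span_ishLevel_succ hρ hN hL₀]
  refine Submodule.finrank_sup_span_singleton_of_finite fun hmem => ?_
  have h := eval_eq_zero_of_mem_span
    (fun p hp => eval_single_eq_zero_of_mem_ishLevel le_rfl hp) hmem
  simp [eval_single_eq_zero_of_mem_lowerForms hL₀] at h

theorem isSupersolvable_coneIsh_of_ranking (hρ : Function.Injective ρ)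
    (hN : ∀ a j, ρ a < ρ j → N j ⊆ N a) (h₀ : ∀ j, ρ j = 0 → N j = ∅) {r : ℕ} (hr : 1 ≤ r)
    (hρr : ∀ j, ρ j < r) (hnew : ∀ m, 1 ≤ m → m < r → ∃ j, ρ j = m ∧ (lowerForms N ρ j).Nonempty) :
    IsSupersolvable (coneIsh n N) := by
  have hrank : ∀ m, m < r → Module.finrank K (Submodule.span K (ishLevel N ρ (m + 1))) = m + 1 := by
    intro m hm
    induction m with
    | zero => rw [ishLevel_one N ρ hρ h₀, finrank_span_singleton (X_ne_zero _)]
    | succ m ih =>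
      obtain ⟨j, hj, L₀, hL₀⟩ := hnew (m + 1) (by omega) hm
      have hprev := ih (by omega)
      rw [← hj] at hprev ⊢
      have := Module.finite_of_finrank_pos (by rw [hprev]; omega)
      rw [finrank_span_ishLevel_succ hρ hN hL₀, hprev]
  obtain ⟨r, rfl⟩ : ∃ r', r = r' + 1 := ⟨r - 1, by omega⟩
  refine ⟨r + 1, ishLevel N ρ, ?_, fun i => ishLevel_mono N ρ i.le_succ,
    ishLevel_eq_coneIsh N ρ hρr, fun i hi hir => ?_, fun i hi _ α hα β hβ hne => ?_⟩
  · rw [← ishLevel_eq_coneIsh N ρ hρr, hrank r r.lt_succ_self]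
  · obtain ⟨m, rfl⟩ : ∃ m, i = m + 1 := ⟨i - 1, by omega⟩
    exact hrank m (by omega)
  · obtain ⟨m, rfl⟩ : ∃ m, i = m + 1 := ⟨i - 1, by omega⟩
    exact ishLevel_modular hρ hN hα hβ hne

end IshFiltration

theorem isSupersolvable_coneIsh_of_forall_eq_empty {K : Type*} [Field K] {n : ℕ}
    {N : Fin n → Finset K} (hN : ∀ j, N j = ∅) : IsSupersolvable (coneIsh n N) :=
  isSupersolvable_coneIsh_of_ranking (ρ := Fin.val) (r := max n 1) Fin.val_injective
    (fun _ j _ => by simp [hN j]) (fun j _ => hN j) (le_max_right _ _)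
    (fun j => lt_max_of_lt_left j.isLt)
    (fun m hm hmr => ⟨⟨m, by omega⟩, rfl, _, Or.inl ⟨⟨0, by omega⟩, hm, rfl⟩⟩)

theorem isSupersolvable_coneIsh_of_nest {K : Type*} [Field K] {n : ℕ} {N : Fin n → Finset K}
    (w : Equiv.Perm (Fin n)) (hw : ∀ i j, i ≤ j → N (w i) ⊆ N (w j)) {j₀ : Fin n}
    (hj₀ : (N j₀).Nonempty) : IsSupersolvable (coneIsh n N) := by
  have hn : 0 < n := j₀.pos
  obtain ⟨ρ, hρ⟩ : ∃ ρ : Fin n → ℕ, ∀ j, ρ j = n - w.symm j := ⟨_, fun _ => rfl⟩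
  have hw_lt (j : Fin n) : (w.symm j : ℕ) < n := (w.symm j).isLt
  have hρ_w (k : ℕ) (hk : k < n) : ρ (w ⟨k, hk⟩) = n - k := by simp [hρ]
  have hlast : ∀ j, N j ⊆ N (w ⟨n - 1, by omega⟩) := fun j => by
    simpa using hw (w.symm j) _ (Fin.le_def.2 (Nat.le_sub_one_of_lt (hw_lt j)))
  refine isSupersolvable_coneIsh_of_ranking (ρ := ρ) (r := n + 1)
    (fun a b h => w.symm.injective (Fin.ext (by have := hw_lt a; have := hw_lt b; grind)))
    (fun a j h => by simpa using hw (w.symm j) (w.symm a) (Fin.le_def.2 (by grind)))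
    (fun j h => absurd h (by grind)) (by omega) (fun j => by grind)
    (fun m hm hmn => ⟨w ⟨n - m, by omega⟩, by rw [hρ_w]; omega, ?_⟩)
  rcases Nat.lt_or_ge 1 m with hm1 | hm1
  · exact ⟨_, Or.inl ⟨w ⟨n - 1, by omega⟩, by rw [hρ_w, hρ_w]; omega, rfl⟩⟩
  · obtain ⟨c, hc⟩ := hj₀
    obtain rfl : m = 1 := by omega
    exact ⟨_, Or.inr ⟨c, hlast j₀ hc, rfl⟩⟩

theorem cone_ish_supersolvable_general (K : Type*) [Field K]
    (n : ℕ) (N : Fin n → Finset K) (h : IsNest N) :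
    IsSupersolvable (coneIsh n N) := by
  obtain ⟨w, hw⟩ := h
  rcases em (∃ j, (N j).Nonempty) with ⟨j₀, hj₀⟩ | hN
  · exact isSupersolvable_coneIsh_of_nest w hw hj₀
  · exact isSupersolvable_coneIsh_of_forall_eq_empty fun j =>
      Finset.not_nonempty_iff_eq_empty.1 fun h => hN ⟨j, h⟩

/-- If `N` is a nest, then the cone over the `N`-Ish arrangement is supersolvable. -/
theorem cone_ish_supersolvable (K : Type*) [Field K] [CharZero K]
    (n : ℕ) (N : Fin n → Finset K) (h : IsNest N) :
    IsSupersolvable (coneIsh n N) :=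
  cone_ish_supersolvable_general K n N h

end
end

section
/- For 2 ≤ k ≤ ℓ and N with N_2 ⊆ … ⊆ N_ℓ, the derivation θ_k = Σ_{s=2}^{k} (∏_{a∈N_k}(x_1 − x_s − a z) · ∏_{t=k+1}^{ℓ}(x_s − x_t)) ∂/∂x_s belongs to D(c(Ish_N)), i.e., θ_k(α_H) ∈ α_H·S for every hyperplane H of c(Ish_N). -/
open MvPolynomial

noncomputable section

def logDer (K : Type*) [CommRing K] {σ : Type*} (A : Set (MvPolynomial σ K)) :
    Submodule (MvPolynomial σ K)
      (Derivation K (MvPolynomial σ K) (MvPolynomial σ K)) where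
  carrier := {θ | ∀ α ∈ A, θ α ∈ Ideal.span {α}}
  add_mem' := by
    intro θ η hθ hη α hα
    simpa using Ideal.add_mem _ (hθ α hα) (hη α hα)
  zero_mem' := by intro α hα; simp
  smul_mem' := by
    intro r θ hθ α hα
    simpa [smul_eq_mul] using Ideal.mul_mem_left _ r (hθ α hα)

variable {K : Type*} [Field K] [CharZero K]

/-- The coefficient of `∂/∂x_{s+2}` in θ_{j+2}. -/
def ishCoef (n : ℕ) (N : Fin n → Finset K) (j s : Fin n) :
    MvPolynomial (Option (Fin (n + 1))) K :=
  if s ≤ j then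
    (∏ a ∈ N j, (X (some 0) - X (some s.succ) - C a * X none)) *
      ∏ t ∈ Finset.univ.filter (fun t => j < t), (X (some s.succ) - X (some t.succ))
  else 0

/-- θ_{j+2} = ∑_{s=2}^{j+2} (∏_{a∈N_{j+2}}(x₁-x_s-az) ∏_{t=j+3}^{ℓ}(x_s-x_t)) ∂/∂x_s. -/
def thetak (n : ℕ) (N : Fin n → Finset K) (j : Fin n) :
    Derivation K (MvPolynomial (Option (Fin (n + 1))) K)
      (MvPolynomial (Option (Fin (n + 1))) K) :=
  mkDerivation K (fun o =>
    Option.elim o 0 (fun i => if h : i = 0 then 0 else ishCoef n N j (i.pred h)))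

lemma thetak_X_none (n : ℕ) (N : Fin n → Finset K) (j : Fin n) :
    thetak n N j (X none) = 0 := by
  simp [thetak, mkDerivation_X]

lemma thetak_X_zero (n : ℕ) (N : Fin n → Finset K) (j : Fin n) :
    thetak n N j (X (some 0)) = 0 := by
  simp [thetak, mkDerivation_X]

lemma thetak_X_succ (n : ℕ) (N : Fin n → Finset K) (j i : Fin n) :
    thetak n N j (X (some i.succ)) = ishCoef n N j i := by
  simp only [thetak, mkDerivation_X, Option.elim]
  rw [dif_neg (Fin.succ_ne_zero i), Fin.pred_succ]

/-- For `N₂ ⊆ N₃ ⊆ … ⊆ N_ℓ` and `2 ≤ k ≤ ℓ` (here `k = j+2`), the derivation θ_k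
belongs to D(c(Ish_N)), i.e. θ_k(α_H) ∈ α_H·S for every hyperplane H of c(Ish_N). -/
theorem thetak_mem (n : ℕ) (N : Fin n → Finset K)
    (hN : ∀ i j : Fin n, i ≤ j → N i ⊆ N j) (j : Fin n) :
    thetak n N j ∈ logDer K (coneIsh n N) := by
  intro α hα
  simp only [coneIsh, Set.mem_union, Set.mem_singleton_iff, Set.mem_setOf_eq] at hα
  rcases hα with ((rfl | ⟨i, j', hij, rfl⟩) | ⟨s, a, ha, rfl⟩)
  · simp [thetak_X_none]
  · -- α = X i.succ - X j'.succ, i < j'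
    rw [map_sub, thetak_X_succ, thetak_X_succ, Ideal.mem_span_singleton]
    by_cases hj' : j' ≤ j
    · have hi : i ≤ j := le_of_lt (lt_of_lt_of_le hij hj')
      rw [← Ideal.mem_span_singleton, ← Ideal.Quotient.eq_zero_iff_mem, map_sub]
      have hx : Ideal.Quotient.mk
            (Ideal.span {(X (some i.succ) - X (some j'.succ)
              : MvPolynomial (Option (Fin (n+1))) K)}) (X (some i.succ))
          = Ideal.Quotient.mk _ (X (some j'.succ)) :=
        Ideal.Quotient.eq.2 (Ideal.subset_span rfl)
      rw [ishCoef, ishCoef, if_pos hi, if_pos hj']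
      simp [map_prod, hx]
    · push_neg at hj'
      rw [ishCoef, ishCoef, if_neg (not_le.2 hj'), sub_zero]
      split_ifs with hi
      · refine Dvd.dvd.mul_left ?_ _
        exact Finset.dvd_prod_of_mem _ (Finset.mem_filter.2 ⟨Finset.mem_univ _, hj'⟩)
      · exact dvd_zero _
  · -- α = X 0 - X s.succ - C a * X none, a ∈ N s
    have hca : thetak n N j (C a * X none) = 0 := by
      rw [Derivation.leibniz, thetak_X_none]
      simp
    rw [map_sub, map_sub, thetak_X_zero, thetak_X_succ, hca, zero_sub, sub_zero,
      Ideal.mem_span_singleton, dvd_neg, ishCoef]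
    split_ifs with hs
    · refine Dvd.dvd.mul_right ?_ _
      exact Finset.dvd_prod_of_mem _ (hN s j hs ha)
    · exact dvd_zero _

end
end

section
/- If N = (N_2, N_3) with N_2 ⊄ N_3 and N_3 ⊄ N_2 (N not a nest, ℓ = 3), then the cone over the N-Ish arrangement in K^4 is not free. -/
/-!
Write `v = x₂ - x₃` and `F₂, F₃` for the products of the forms `x₁ - x₂ - az` (`a ∈ N₂`) and
`x₁ - x₃ - bz` (`b ∈ N₃`). Subtracting multiples of the Euler derivation and of `∂₁ + ∂₂ + ∂₃`
brings every logarithmic derivation to the form `F₂ g ∂₂ + F₃ h ∂₃`, which is logarithmic iff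
`v ∣ F₂ g - F₃ h`; so the module `L` of such compatible pairs `(g, h)` is a direct summand of
`D(A)`. Modulo `v`, `F₂` and `F₃` become `D P` and `D Q`, where `P` and `Q` are the products over
`N₂ \ N₃` and `N₃ \ N₂` and are coprime. Hence `L` is generated by `(v, 0)`, `(0, v)`, `(Q, P)`
with the single relation `(Q, P, -v)`. If `L` were projective this relation would split off,
putting `1` in the ideal `(Q, P, v)`; but when `N` is not a nest, `P`, `Q` and `v` all vanish
at the origin.
-/

open MvPolynomial

noncomputable section

namespace LinearMap

variable {R M : Type*} [CommRing R] [IsDomain R] [AddCommMonoid M] [Module R M]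

def divOfDvd (q : M →ₗ[R] R) {d : R} (hd : d ≠ 0) (h : ∀ m, d ∣ q m) :
    M →ₗ[R] R :=
  (LinearEquiv.coord R R d hd).toLinearMap ∘ₗ
    q.codRestrict (R ∙ d) fun m => Ideal.mem_span_singleton.2 (h m)

theorem divOfDvd_mul (q : M →ₗ[R] R) {d : R} (hd : d ≠ 0) (h : ∀ m, d ∣ q m) (m : M) :
    q.divOfDvd hd h m * d = q m :=
  LinearEquiv.coord_apply_smul R R d hd _

theorem divOfDvd_eq_of_eq_mul {q : M →ₗ[R] R} {d : R} (hd : d ≠ 0) (h : ∀ m, d ∣ q m)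
    {m : M} {y : R} (hy : q m = y * d) : q.divOfDvd hd h m = y :=
  mul_right_cancel₀ hd (by rw [divOfDvd_mul, hy])

end LinearMap

theorem Module.not_projective_of_ker_eq_span_singleton {R M ι : Type*} [CommRing R] [IsDomain R]
    [AddCommGroup M] [Module R M] [Fintype ι] (f : (ι → R) →ₗ[R] M)
    (hf : Function.Surjective f) {r : ι → R} (hr : r ≠ 0) (hker : LinearMap.ker f = R ∙ r)
    {I : Ideal R} (hI : I ≠ ⊤) (hrI : ∀ i, r i ∈ I) : ¬ Module.Projective R M := by
  classical
  intro _
  obtain ⟨s, hs⟩ := Module.projective_lifting_property f LinearMap.id hf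
  set Θ := LinearMap.id - s ∘ₗ f
  have hΘ : ∀ y, Θ y ∈ R ∙ r := fun y => by
    rw [← hker, LinearMap.mem_ker]
    simp [Θ, ← LinearMap.comp_apply f s, hs]
  choose d hd using fun i => Submodule.mem_span_singleton.1 (hΘ (Pi.single i 1))
  have hΘr : Θ r = r := by
    have : f r = 0 := by rw [← LinearMap.mem_ker, hker]; exact Submodule.mem_span_singleton_self r
    simp [Θ, this]
  have hsum : (∑ i, r i * d i) • r = r :=
    calc (∑ i, r i * d i) • r = ∑ i, r i • Θ (Pi.single i 1) := by
          simp only [Finset.sum_smul, mul_smul, hd]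
      _ = Θ r := by
          conv_rhs => rw [pi_eq_sum_univ' r, map_sum]
          simp only [map_smul]
      _ = r := hΘr
  have hone : ∑ i, r i * d i = 1 := by
    have h0 : (∑ i, r i * d i - 1) • r = 0 := by rw [sub_smul, one_smul, hsum, sub_self]
    rwa [smul_eq_zero, or_iff_left hr, sub_eq_zero] at h0
  exact hI ((Ideal.eq_top_iff_one I).2 (hone ▸ I.sum_mem fun i _ => I.mul_mem_right _ (hrI i)))

namespace MvPolynomial

variable {σ R : Type*} [CommRing R] [DecidableEq σ] (i j : σ)

theorem rename_update_rename_update (f : MvPolynomial σ R) :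
    rename (Function.update id i j) (rename (Function.update id i j) f) =
      rename (Function.update id i j) f := by
  rw [rename_rename]
  congr 2
  funext k
  by_cases hk : k = i <;> by_cases hj : j = i <;> simp [hk, hj]

theorem X_sub_X_dvd_sub_rename_update (f : MvPolynomial σ R) :
    X i - X j ∣ f - rename (Function.update id i j) f := by
  induction f using MvPolynomial.induction_on with
  | C a => simp
  | add p q hp hq => simpa [add_sub_add_comm] using dvd_add hp hq
  | mul_X p k hp =>
    have hk : X i - X j ∣ X k - rename (Function.update id i j) (X k : MvPolynomial σ R) := by
      by_cases hki : k = i <;> simp [hki]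
    have e : p * X k - rename (Function.update id i j) (p * X k) =
        (p - rename (Function.update id i j) p) * X k +
          rename (Function.update id i j) p * (X k - rename (Function.update id i j) (X k)) := by
      rw [map_mul]; ring
    rw [e]
    exact dvd_add (dvd_mul_of_dvd_left hp _) (dvd_mul_of_dvd_right hk _)

theorem X_sub_X_dvd_iff (f : MvPolynomial σ R) :
    X i - X j ∣ f ↔ rename (Function.update id i j) f = 0 := by
  constructor
  · rintro ⟨c, rfl⟩
    by_cases hj : j = i <;> simp [hj]
  · intro h
    simpa [h] using X_sub_X_dvd_sub_rename_update i j f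

end MvPolynomial

namespace Derivation

variable {R A M : Type*} [CommSemiring R] [CommSemiring A] [Algebra R A] [AddCommMonoid M]
  [Module A M] [Module R M] [IsScalarTower R A M]

def evalLinearMap (a : A) : Derivation R A M →ₗ[A] M where
  toFun D := D a
  map_add' _ _ := rfl
  map_smul' _ _ := rfl

theorem evalLinearMap_apply (a : A) (D : Derivation R A M) : evalLinearMap a D = D a := rfl

end Derivation

theorem MvPolynomial.prime_sumSMulX {σ K : Type*} [Field K] {c : σ →₀ K} (hc : c ≠ 0) :
    Prime (sumSMulX c) := by
  obtain ⟨i, hi⟩ := Finsupp.ne_iff.1 hc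
  refine UniqueFactorizationMonoid.irreducible_iff_prime.1
    (irreducible_sumSMulX c ⟨i, by simpa using hi⟩ fun r hr => ?_)
  exact isUnit_of_dvd_unit (hr i) (IsUnit.mk0 _ hi)

namespace ConeIsh

variable {K : Type*} [Field K]

local notation "𝓡" => MvPolynomial (Option (Fin 3)) K

def form (j : Fin 3) (a : K) : 𝓡 := X (some 0) - X (some j) - C a * X none

def braidForm : 𝓡 := X (some 1) - X (some 2)

theorem braidForm_ne_zero : (braidForm : 𝓡) ≠ 0 :=
  sub_ne_zero.2 ((X_injective (R := K)).ne (by decide))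

theorem form_eq_sumSMulX (j : Fin 3) (a : K) :
    form j a =
      sumSMulX (Finsupp.single (some 0) 1 - Finsupp.single (some j) 1 - Finsupp.single none a) := by
  simp [sumSMulX, form, smul_eq_C_mul]

theorem prime_form {j : Fin 3} (hj : j ≠ 0) (a : K) : Prime (form j a) := by
  rw [form_eq_sumSMulX]
  refine prime_sumSMulX fun h => ?_
  have := congrArg (· (some 0)) h
  simp [hj.symm] at this

theorem form_dvd_form_iff {j : Fin 3} (hj : j ≠ 0) {a b : K} : form j a ∣ form j b ↔ a = b := by
  refine ⟨fun ⟨c, hc⟩ => ?_, fun h => h ▸ dvd_rfl⟩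
  have := congrArg (eval fun o => o.elim 1 fun k => if k = 0 then a else 0) hc
  simpa [form, hj, sub_eq_zero, eq_comm] using this

theorem coneIsh_eq (N2 N3 : Finset K) :
    coneIsh 2 ![N2, N3] = {X none, braidForm} ∪ form 1 '' N2 ∪ form 2 '' N3 := by
  ext α
  simp [coneIsh, Fin.exists_fin_two, braidForm, form]
  grind

def formProd (j : Fin 3) (N : Finset K) : 𝓡 := ∏ a ∈ N, form j a

theorem form_dvd_formProd {j : Fin 3} {N : Finset K} {a : K} (ha : a ∈ N) :
    form j a ∣ formProd j N :=
  Finset.dvd_prod_of_mem _ ha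

theorem formProd_ne_zero {j : Fin 3} (hj : j ≠ 0) (N : Finset K) : formProd j N ≠ 0 :=
  Finset.prod_ne_zero_iff.2 fun a _ => (prime_form hj a).ne_zero

theorem isRelPrime_form {j : Fin 3} (hj : j ≠ 0) {a b : K} (hab : a ≠ b) :
    IsRelPrime (form j a) (form j b) :=
  (prime_form hj a).irreducible.isRelPrime_iff_not_dvd.2 fun h => hab ((form_dvd_form_iff hj).1 h)

theorem isRelPrime_formProd {j : Fin 3} (hj : j ≠ 0) {M N : Finset K} (h : Disjoint M N) :
    IsRelPrime (formProd j M) (formProd j N) :=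
  IsRelPrime.prod_left fun _ ha => IsRelPrime.prod_right fun _ hb =>
    isRelPrime_form hj (Finset.disjoint_left.1 h ha <| · ▸ hb)

theorem formProd_dvd {j : Fin 3} (hj : j ≠ 0) {N : Finset K} {q : 𝓡}
    (h : ∀ a ∈ N, form j a ∣ q) : formProd j N ∣ q :=
  Finset.prod_dvd_of_isRelPrime (fun _ _ _ _ hab => isRelPrime_form hj hab) h

theorem constantCoeff_form (j : Fin 3) (a : K) : constantCoeff (form j a) = 0 := by
  simp [form]

theorem constantCoeff_formProd {j : Fin 3} {N : Finset K} (hN : N.Nonempty) :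
    constantCoeff (formProd j N) = 0 := by
  obtain ⟨a, ha⟩ := hN
  rw [formProd, map_prod]
  exact Finset.prod_eq_zero ha (constantCoeff_form j a)

def collapse : 𝓡 →ₐ[K] 𝓡 := rename (Function.update id (some 2) (some 1))

theorem braidForm_dvd_iff (f : 𝓡) : braidForm ∣ f ↔ collapse f = 0 := by
  rw [← neg_dvd, braidForm, neg_sub]
  exact X_sub_X_dvd_iff _ _ f

theorem collapse_collapse (f : 𝓡) : collapse (collapse f) = collapse f :=
  rename_update_rename_update _ _ f

theorem collapse_form {j : Fin 3} (hj : j ≠ 0) (a : K) : collapse (form j a) = form 1 a := by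
  fin_cases j
  · exact absurd rfl hj
  all_goals simp [collapse, form]

theorem collapse_formProd {j : Fin 3} (hj : j ≠ 0) (N : Finset K) :
    collapse (formProd j N) = formProd 1 N := by
  simp only [formProd, map_prod, collapse_form hj]

theorem collapse_braidForm : collapse (braidForm : 𝓡) = 0 :=
  (braidForm_dvd_iff _).1 dvd_rfl

section Presentation

variable (N2 N3 : Finset K)

def compatiblePairs : Submodule 𝓡 (𝓡 × 𝓡) :=
  Submodule.comap (formProd 1 N2 • LinearMap.fst 𝓡 𝓡 𝓡 - formProd 2 N3 • LinearMap.snd 𝓡 𝓡 𝓡)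
    (Ideal.span {braidForm})

variable {N2 N3} in
theorem mem_compatiblePairs {gh : 𝓡 × 𝓡} :
    gh ∈ compatiblePairs N2 N3 ↔ braidForm ∣ formProd 1 N2 * gh.1 - formProd 2 N3 * gh.2 := by
  simp [compatiblePairs, Ideal.mem_span_singleton]

variable [DecidableEq K]

theorem collapse_formProd_one :
    collapse (formProd 1 N2) = formProd 1 (N2 ∩ N3) * formProd 1 (N2 \ N3) := by
  rw [collapse_formProd one_ne_zero, formProd, formProd, formProd,
    Finset.prod_inter_mul_prod_sdiff]

theorem collapse_formProd_two :
    collapse (formProd 2 N3) = formProd 1 (N2 ∩ N3) * formProd 1 (N3 \ N2) := by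
  rw [collapse_formProd (by decide : (2 : Fin 3) ≠ 0), Finset.inter_comm, formProd, formProd,
    formProd, Finset.prod_inter_mul_prod_sdiff]

theorem braidForm_dvd_cross :
    braidForm ∣ formProd 1 N2 * formProd 1 (N3 \ N2) - formProd 2 N3 * formProd 1 (N2 \ N3) := by
  rw [braidForm_dvd_iff, map_sub, map_mul, map_mul, collapse_formProd_one, collapse_formProd_two,
    collapse_formProd one_ne_zero, collapse_formProd one_ne_zero]
  ring

def presentation : (Fin 3 → 𝓡) →ₗ[𝓡] compatiblePairs N2 N3 where
  toFun c := ⟨(braidForm * c 0 + formProd 1 (N3 \ N2) * c 2,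
      braidForm * c 1 + formProd 1 (N2 \ N3) * c 2), by
    rw [mem_compatiblePairs]
    have e : formProd 1 N2 * (braidForm * c 0 + formProd 1 (N3 \ N2) * c 2) -
        formProd 2 N3 * (braidForm * c 1 + formProd 1 (N2 \ N3) * c 2) =
        braidForm * (formProd 1 N2 * c 0 - formProd 2 N3 * c 1) +
          (formProd 1 N2 * formProd 1 (N3 \ N2) - formProd 2 N3 * formProd 1 (N2 \ N3)) * c 2 := by
      ring
    rw [e]
    exact dvd_add (dvd_mul_right _ _) (dvd_mul_of_dvd_left (braidForm_dvd_cross N2 N3) _)⟩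
  map_add' _ _ := by
    apply Subtype.ext
    apply Prod.ext <;> simp only [Pi.add_apply, AddMemClass.mk_add_mk, Prod.mk_add_mk] <;> ring
  map_smul' _ _ := by
    apply Subtype.ext
    apply Prod.ext <;> simp only [Pi.smul_apply, smul_eq_mul, RingHom.id_apply, SetLike.mk_smul_mk,
      Prod.smul_mk] <;> ring

theorem presentation_apply (c : Fin 3 → 𝓡) :
    (presentation N2 N3 c : 𝓡 × 𝓡) = (braidForm * c 0 + formProd 1 (N3 \ N2) * c 2,
      braidForm * c 1 + formProd 1 (N2 \ N3) * c 2) := rfl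

theorem presentation_surjective : Function.Surjective (presentation N2 N3) := by
  rintro ⟨⟨g, h⟩, hgh⟩
  set P := formProd 1 (N2 \ N3) (K := K)
  set Q := formProd 1 (N3 \ N2) (K := K)
  rw [mem_compatiblePairs, braidForm_dvd_iff, map_sub, map_mul, map_mul, collapse_formProd_one,
    collapse_formProd_two, sub_eq_zero, mul_assoc, mul_assoc] at hgh
  have hPQ : P * collapse g = Q * collapse h :=
    mul_left_cancel₀ (formProd_ne_zero one_ne_zero _) hgh
  obtain ⟨w, hw⟩ : Q ∣ collapse g :=
    (isRelPrime_formProd one_ne_zero disjoint_sdiff_sdiff).symm.dvd_of_dvd_mul_left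
      ⟨collapse h, hPQ⟩
  have hg : collapse g = Q * collapse w := by
    rw [← collapse_collapse, hw, map_mul, collapse_formProd one_ne_zero]
  have hh : collapse h = P * collapse w :=
    mul_left_cancel₀ (formProd_ne_zero one_ne_zero _) (by rw [← hPQ, hg]; ring)
  obtain ⟨c0, hc0⟩ : braidForm ∣ g - Q * collapse w := by
    rw [braidForm_dvd_iff, map_sub, map_mul, collapse_collapse, collapse_formProd one_ne_zero, hg,
      sub_self]
  obtain ⟨c1, hc1⟩ : braidForm ∣ h - P * collapse w := by
    rw [braidForm_dvd_iff, map_sub, map_mul, collapse_collapse, collapse_formProd one_ne_zero, hh,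
      sub_self]
  refine ⟨![c0, c1, collapse w], Subtype.ext ?_⟩
  rw [presentation_apply]
  refine Prod.ext ?_ ?_
  · simp only [Matrix.cons_val_zero, Matrix.cons_val]
    linear_combination -hc0
  · simp only [Matrix.cons_val_one, Matrix.cons_val_zero, Matrix.cons_val]
    linear_combination -hc1

def syzygy : Fin 3 → 𝓡 := ![formProd 1 (N3 \ N2), formProd 1 (N2 \ N3), -braidForm]

theorem syzygy_ne_zero : syzygy N2 N3 ≠ 0 :=
  fun h => braidForm_ne_zero (neg_eq_zero.1 (congrFun h 2))

variable {N2 N3} in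
theorem syzygy_mem_ker_constantCoeff (h23 : ¬ N2 ⊆ N3) (h32 : ¬ N3 ⊆ N2) (i : Fin 3) :
    syzygy N2 N3 i ∈ RingHom.ker constantCoeff := by
  rw [RingHom.mem_ker]
  fin_cases i
  · exact constantCoeff_formProd (Finset.sdiff_nonempty.2 h32)
  · exact constantCoeff_formProd (Finset.sdiff_nonempty.2 h23)
  · simp [syzygy, braidForm]

theorem ker_presentation : LinearMap.ker (presentation N2 N3) = 𝓡 ∙ syzygy N2 N3 := by
  ext c
  rw [LinearMap.mem_ker, Submodule.mem_span_singleton]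
  constructor
  · intro hc
    obtain ⟨h0, h1⟩ := Prod.ext_iff.1 (congrArg Subtype.val hc)
    simp only [presentation_apply, ZeroMemClass.coe_zero, Prod.fst_zero, Prod.snd_zero] at h0 h1
    obtain ⟨d, hd⟩ : braidForm ∣ c 2 := by
      have := congrArg collapse h0
      rw [map_add, map_mul, map_mul, collapse_braidForm, collapse_formProd one_ne_zero, zero_mul,
        zero_add, map_zero, mul_eq_zero, or_iff_right (formProd_ne_zero one_ne_zero _)] at this
      exact (braidForm_dvd_iff _).2 this
    refine ⟨-d, funext fun i => ?_⟩
    fin_cases i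
    · refine mul_left_cancel₀ braidForm_ne_zero ?_
      simp only [syzygy, Fin.zero_eta, Pi.smul_apply, Matrix.cons_val_zero, smul_eq_mul]
      linear_combination -h0 + formProd 1 (N3 \ N2) * hd
    · refine mul_left_cancel₀ braidForm_ne_zero ?_
      simp only [syzygy, Fin.mk_one, Pi.smul_apply, Matrix.cons_val_one, Matrix.cons_val_zero,
        smul_eq_mul]
      linear_combination -h1 + formProd 1 (N2 \ N3) * hd
    · simp [syzygy, hd, mul_comm]
  · rintro ⟨d, rfl⟩
    refine Subtype.ext (Prod.ext ?_ ?_) <;> simp [presentation_apply, syzygy] <;> ring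

end Presentation

section Derivations

variable (N2 N3 : Finset K)

theorem X_none_mem_coneIsh : X none ∈ coneIsh 2 ![N2, N3] := by simp [coneIsh_eq]

theorem braidForm_mem_coneIsh : braidForm ∈ coneIsh 2 ![N2, N3] := by simp [coneIsh_eq]

variable {N2 N3} in
theorem form_one_mem_coneIsh {a : K} (ha : a ∈ N2) : form 1 a ∈ coneIsh 2 ![N2, N3] := by
  rw [coneIsh_eq]
  exact Or.inl (Or.inr ⟨a, ha, rfl⟩)

variable {N2 N3} in
theorem form_two_mem_coneIsh {b : K} (hb : b ∈ N3) : form 2 b ∈ coneIsh 2 ![N2, N3] := by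
  rw [coneIsh_eq]
  exact Or.inr ⟨b, hb, rfl⟩

theorem derivation_form (θ : Derivation K 𝓡 𝓡) (j : Fin 3) (a : K) :
    θ (form j a) = θ (X (some 0)) - θ (X (some j)) - C a * θ (X none) := by
  simp [form, Derivation.leibniz, derivation_C]

def pairDerivation : 𝓡 × 𝓡 →ₗ[𝓡] Derivation K 𝓡 𝓡 :=
  (formProd 1 N2 • LinearMap.fst 𝓡 𝓡 𝓡).smulRight (pderiv (some 1)) +
    (formProd 2 N3 • LinearMap.snd 𝓡 𝓡 𝓡).smulRight (pderiv (some 2))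

theorem pairDerivation_apply_X (gh : 𝓡 × 𝓡) (k : Option (Fin 3)) :
    pairDerivation N2 N3 gh (X k) =
      if k = some 1 then formProd 1 N2 * gh.1
      else if k = some 2 then formProd 2 N3 * gh.2 else 0 := by
  by_cases h1 : k = some 1 <;> by_cases h2 : k = some 2 <;>
    simp [pairDerivation, pderiv_X, h1, h2]

variable {N2 N3} in
theorem pairDerivation_mem {gh : 𝓡 × 𝓡} (hgh : gh ∈ compatiblePairs N2 N3) :
    pairDerivation N2 N3 gh ∈ logDer K (coneIsh 2 ![N2, N3]) := by
  rw [mem_compatiblePairs] at hgh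
  intro α hα
  rw [coneIsh_eq] at hα
  rw [Ideal.mem_span_singleton]
  rcases hα with ((rfl | rfl) | ⟨a, ha, rfl⟩) | ⟨b, hb, rfl⟩
  · simp [pairDerivation_apply_X]
  · simpa [braidForm, pairDerivation_apply_X] using hgh
  · simpa [derivation_form, pairDerivation_apply_X] using
      dvd_mul_of_dvd_left (form_dvd_formProd ha) _
  · simpa [derivation_form, pairDerivation_apply_X] using
      dvd_mul_of_dvd_left (form_dvd_formProd hb) _

def derivOfPair : compatiblePairs N2 N3 →ₗ[𝓡] logDer K (coneIsh 2 ![N2, N3]) :=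
  ((pairDerivation N2 N3).domRestrict _).codRestrict _ fun gh => pairDerivation_mem gh.2

def logEval (A : Set 𝓡) (p : 𝓡) : logDer K A →ₗ[𝓡] 𝓡 :=
  (Derivation.evalLinearMap (R := K) p).domRestrict _

theorem logEval_apply (A : Set 𝓡) (p : 𝓡) (θ : logDer K A) : logEval A p θ = θ.1 p := rfl

def eulerCoeff : logDer K (coneIsh 2 ![N2, N3]) →ₗ[𝓡] 𝓡 :=
  (logEval (coneIsh 2 ![N2, N3]) (X none)).divOfDvd (X_ne_zero none) fun θ =>
    Ideal.mem_span_singleton.1 (θ.2 _ (X_none_mem_coneIsh N2 N3))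

/-- `residue j θ` is the `∂/∂x_{j+1}`-coefficient of `θ` once multiples of the Euler derivation
and of `∂₁ + ∂₂ + ∂₃`, both logarithmic, are subtracted so as to kill `x₁` and `z`. -/
def residue (j : Fin 3) : logDer K (coneIsh 2 ![N2, N3]) →ₗ[𝓡] 𝓡 :=
  logEval _ (X (some j)) - logEval _ (X (some 0)) +
    (X (some 0) - X (some j) : 𝓡) • eulerCoeff N2 N3

variable {N2 N3}

theorem residue_eq (θ : logDer K (coneIsh 2 ![N2, N3])) (j : Fin 3) (a : K) :
    residue N2 N3 j θ = eulerCoeff N2 N3 θ * form j a - θ.1 (form j a) := by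
  have hs : eulerCoeff N2 N3 θ * X none = θ.1 (X none) := LinearMap.divOfDvd_mul _ _ _ θ
  simp only [residue, LinearMap.add_apply, LinearMap.sub_apply, LinearMap.smul_apply, smul_eq_mul]
  rw [logEval_apply, logEval_apply, derivation_form, ← hs, form]
  ring

theorem form_dvd_residue (θ : logDer K (coneIsh 2 ![N2, N3])) {j : Fin 3} {a : K}
    (h : form j a ∈ coneIsh 2 ![N2, N3]) : form j a ∣ residue N2 N3 j θ := by
  rw [residue_eq θ j a]
  exact dvd_sub (dvd_mul_left _ _) (Ideal.mem_span_singleton.1 (θ.2 _ h))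

theorem residue_one_sub_residue_two (θ : logDer K (coneIsh 2 ![N2, N3])) :
    residue N2 N3 1 θ - residue N2 N3 2 θ = θ.1 braidForm - eulerCoeff N2 N3 θ * braidForm := by
  simp only [residue, LinearMap.add_apply, LinearMap.sub_apply, LinearMap.smul_apply, smul_eq_mul]
  rw [logEval_apply, logEval_apply, logEval_apply, braidForm, map_sub]
  ring

variable (N2 N3)

def pairOfDeriv : logDer K (coneIsh 2 ![N2, N3]) →ₗ[𝓡] compatiblePairs N2 N3 :=
  LinearMap.codRestrict _
    (LinearMap.prod
      ((residue N2 N3 1).divOfDvd (formProd_ne_zero one_ne_zero N2) fun θ =>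
        formProd_dvd one_ne_zero fun _ ha => form_dvd_residue θ (form_one_mem_coneIsh ha))
      ((residue N2 N3 2).divOfDvd (formProd_ne_zero (by decide) N3) fun θ =>
        formProd_dvd (by decide) fun _ hb => form_dvd_residue θ (form_two_mem_coneIsh hb)))
    fun θ => by
      rw [mem_compatiblePairs]
      simp only [LinearMap.prod_apply, Function.prod_apply]
      rw [mul_comm, LinearMap.divOfDvd_mul, mul_comm, LinearMap.divOfDvd_mul,
        residue_one_sub_residue_two]
      exact dvd_sub (Ideal.mem_span_singleton.1 (θ.2 _ (braidForm_mem_coneIsh N2 N3)))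
        (dvd_mul_left _ _)

theorem pairOfDeriv_comp_derivOfPair :
    pairOfDeriv N2 N3 ∘ₗ derivOfPair N2 N3 = LinearMap.id := by
  ext gh : 1
  have hθ (k : Option (Fin 3)) : (derivOfPair N2 N3 gh).1 (X k) = pairDerivation N2 N3 gh (X k) :=
    rfl
  have hs : eulerCoeff N2 N3 (derivOfPair N2 N3 gh) = 0 :=
    LinearMap.divOfDvd_eq_of_eq_mul _ _ (by simp [logEval_apply, hθ, pairDerivation_apply_X])
  refine Subtype.ext (Prod.ext ?_ ?_)
  · exact LinearMap.divOfDvd_eq_of_eq_mul _ _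
      (by simp [residue, hs, logEval_apply, hθ, pairDerivation_apply_X, mul_comm])
  · exact LinearMap.divOfDvd_eq_of_eq_mul _ _
      (by simp [residue, hs, logEval_apply, hθ, pairDerivation_apply_X, mul_comm])

end Derivations

end ConeIsh

open ConeIsh

theorem cone_ish_not_free_general (K : Type*) [Field K] (N2 N3 : Finset K)
    (h23 : ¬ N2 ⊆ N3) (h32 : ¬ N3 ⊆ N2) :
    ¬ Module.Free (MvPolynomial (Option (Fin 3)) K)
      (logDer K (coneIsh 2 ![N2, N3])) := by
  classical
  intro _
  have : Module.Projective _ (compatiblePairs N2 N3) :=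
    .of_split (derivOfPair N2 N3) (pairOfDeriv N2 N3) (pairOfDeriv_comp_derivOfPair N2 N3)
  exact Module.not_projective_of_ker_eq_span_singleton (presentation N2 N3)
    (presentation_surjective N2 N3) (syzygy_ne_zero N2 N3) (ker_presentation N2 N3)
    (RingHom.ker_ne_top constantCoeff) (syzygy_mem_ker_constantCoeff h23 h32) this

/-- If N = (N₂, N₃) with N₂ ⊄ N₃ and N₃ ⊄ N₂ (so N is not a nest, ℓ = 3), then the cone
over the N-Ish arrangement in K⁴ (with coordinates x₁ = X (some 0), x₂ = X (some 1),
x₃ = X (some 2), z = X none) is not free. -/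
theorem cone_ish_not_free (K : Type*) [Field K] [CharZero K] (N2 N3 : Finset K)
    (h23 : ¬ N2 ⊆ N3) (h32 : ¬ N3 ⊆ N2) :
    ¬ Module.Free (MvPolynomial (Option (Fin 3)) K)
      (logDer K (coneIsh 2 ![N2, N3])) :=
  cone_ish_not_free_general K N2 N3 h23 h32

end
end
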